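/- arXiv:2512.15594 — 8 statements merged into one kernel-verified Lean document; each statement's English description precedes it below -/
import Mathlib

section
/- Let X be a Banach space and let A and B be closed injective linear operators in X. Let S be a densely defined linear operator in X whose range satisfies R(S) ⊆ D(A) ∩ D(B), such that (A+B)Sx = x for all x ∈ D(S), and such that at least one of the two operators AS, BS (each with domain D(S)) admits a bounded extension in L(X). Then both AS and BS admit bounded extensions \overline{AS}, \overline{BS} ∈ L(X); the operator S is closable; its closure \overline{S} is injective; \overline{S} maps D(\overline{S}) into D(A) ∩ D(B); and (A+B)\overline{S}x = x for all x ∈ D(\overline{S}). -/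
/- STATEMENT 0: Lemma 1 of the paper. Unbounded operators in a Banach space `X` are
formalized as `LinearPMap`s `X →ₗ.[ℂ] X`. -/

open Filter Topology

/-- If `A` is a closed operator, `uₙ ∈ D(A)`, `uₙ → x` and `A uₙ → y`, then `x ∈ D(A)`
and `A x = y`. -/
private lemma closed_lim_mem {X : Type*} [NormedAddCommGroup X] [NormedSpace ℂ X]
    (A : X →ₗ.[ℂ] X) (hA : A.IsClosed) (u : ℕ → A.domain) (x y : X)
    (hx : Tendsto (fun n => ((u n : X))) atTop (𝓝 x))
    (hy : Tendsto (fun n => A (u n)) atTop (𝓝 y)) :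
    ∃ h : x ∈ A.domain, A ⟨x, h⟩ = y := by
  have hmem : (x, y) ∈ (A.graph : Set (X × X)) :=
    hA.mem_of_tendsto (hx.prodMk_nhds hy)
      (Filter.Eventually.of_forall fun n => A.mem_graph (u n))
  rcases A.mem_graph_iff.mp hmem with ⟨z, hz1, hz2⟩
  subst hz1
  exact ⟨z.2, hz2⟩

theorem stmt_0 {X : Type*} [NormedAddCommGroup X] [NormedSpace ℂ X] [CompleteSpace X]
    (A B S : X →ₗ.[ℂ] X)
    (hAclosed : A.IsClosed) (hBclosed : B.IsClosed)
    (hAinj : ∀ x : A.domain, A x = 0 → (x : X) = 0)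
    (hBinj : ∀ x : B.domain, B x = 0 → (x : X) = 0)
    (hSdense : Dense (S.domain : Set X))
    (hSA : ∀ x : S.domain, S x ∈ A.domain)
    (hSB : ∀ x : S.domain, S x ∈ B.domain)
    (hABS : ∀ x : S.domain, A ⟨S x, hSA x⟩ + B ⟨S x, hSB x⟩ = (x : X))
    (hbdd : (∃ T : X →L[ℂ] X, ∀ x : S.domain, T (x : X) = A ⟨S x, hSA x⟩) ∨
            (∃ T : X →L[ℂ] X, ∀ x : S.domain, T (x : X) = B ⟨S x, hSB x⟩)) :
    (∃ TA : X →L[ℂ] X, ∀ x : S.domain, TA (x : X) = A ⟨S x, hSA x⟩) ∧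
    (∃ TB : X →L[ℂ] X, ∀ x : S.domain, TB (x : X) = B ⟨S x, hSB x⟩) ∧
    S.IsClosable ∧
    (∀ x : S.closure.domain, S.closure x = 0 → (x : X) = 0) ∧
    (∀ x : S.closure.domain, ∃ (hxA : S.closure x ∈ A.domain) (hxB : S.closure x ∈ B.domain),
      A ⟨S.closure x, hxA⟩ + B ⟨S.closure x, hxB⟩ = (x : X)) := by
  -- Step 1: both `AS` and `BS` have bounded extensions.
  obtain ⟨⟨TA, hTA⟩, ⟨TB, hTB⟩⟩ :
      (∃ T : X →L[ℂ] X, ∀ x : S.domain, T (x : X) = A ⟨S x, hSA x⟩) ∧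
      (∃ T : X →L[ℂ] X, ∀ x : S.domain, T (x : X) = B ⟨S x, hSB x⟩) := by
    rcases hbdd with ⟨T, hT⟩ | ⟨T, hT⟩
    · refine ⟨⟨T, hT⟩, ⟨ContinuousLinearMap.id ℂ X - T, fun x => ?_⟩⟩
      simp only [ContinuousLinearMap.sub_apply, ContinuousLinearMap.id_apply, hT x]
      rw [← hABS x]; abel
    · refine ⟨⟨ContinuousLinearMap.id ℂ X - T, fun x => ?_⟩, ⟨T, hT⟩⟩
      simp only [ContinuousLinearMap.sub_apply, ContinuousLinearMap.id_apply, hT x]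
      rw [← hABS x]; abel
  -- Step 2: the key limit argument.
  have main : ∀ x y : X, (x, y) ∈ S.graph.topologicalClosure →
      ∃ (hyA : y ∈ A.domain) (hyB : y ∈ B.domain),
        A ⟨y, hyA⟩ = TA x ∧ B ⟨y, hyB⟩ = TB x ∧ TA x + TB x = x := by
    intro x y hxy
    have hxy' : (x, y) ∈ closure (S.graph : Set (X × X)) := hxy
    rcases mem_closure_iff_seq_limit.mp hxy' with ⟨p, hp, hptend⟩
    choose d hd1 hd2 using fun n => S.mem_graph_iff.mp (hp n)
    have h1 : Tendsto (fun n => ((d n : X))) atTop (𝓝 x) := by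
      have := (continuous_fst.tendsto (x, y)).comp hptend
      simpa only [Function.comp_def, hd1] using this
    have h2 : Tendsto (fun n => S (d n)) atTop (𝓝 y) := by
      have := (continuous_snd.tendsto (x, y)).comp hptend
      simpa only [Function.comp_def, hd2] using this
    have hTAx : Tendsto (fun n => A ⟨S (d n), hSA (d n)⟩) atTop (𝓝 (TA x)) := by
      have := (TA.continuous.tendsto x).comp h1
      simpa only [Function.comp_def, hTA] using this
    have hTBx : Tendsto (fun n => B ⟨S (d n), hSB (d n)⟩) atTop (𝓝 (TB x)) := by
      have := (TB.continuous.tendsto x).comp h1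
      simpa only [Function.comp_def, hTB] using this
    obtain ⟨hyA, hA⟩ := closed_lim_mem A hAclosed (fun n => ⟨S (d n), hSA (d n)⟩) y (TA x) h2 hTAx
    obtain ⟨hyB, hB⟩ := closed_lim_mem B hBclosed (fun n => ⟨S (d n), hSB (d n)⟩) y (TB x) h2 hTBx
    refine ⟨hyA, hyB, hA, hB, ?_⟩
    have hsum : Tendsto (fun n => A ⟨S (d n), hSA (d n)⟩ + B ⟨S (d n), hSB (d n)⟩)
        atTop (𝓝 (TA x + TB x)) := hTAx.add hTBx
    have hsum' : Tendsto (fun n => A ⟨S (d n), hSA (d n)⟩ + B ⟨S (d n), hSB (d n)⟩)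
        atTop (𝓝 x) := by
      have : (fun n => A ⟨S (d n), hSA (d n)⟩ + B ⟨S (d n), hSB (d n)⟩)
          = fun n => ((d n : X)) := funext fun n => hABS (d n)
      rw [this]; exact h1
    exact tendsto_nhds_unique hsum hsum'
  -- Step 3: closability.
  have hclos : S.IsClosable := by
    refine ⟨S.graph.topologicalClosure.toLinearPMap,
      (Submodule.toLinearPMap_graph_eq _ ?_).symm⟩
    rintro ⟨x, y⟩ hxy (rfl : x = 0)
    obtain ⟨hyA, _, hA, _, _⟩ := main 0 y hxy
    apply hAinj ⟨y, hyA⟩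
    rw [hA, map_zero]
  -- Step 4: the closure satisfies the same identity.
  have hgraph : ∀ x : S.closure.domain, ((x : X), S.closure x) ∈ S.graph.topologicalClosure := by
    intro x
    rw [hclos.graph_closure_eq_closure_graph]
    exact S.closure.mem_graph x
  have claim5 : ∀ x : S.closure.domain,
      ∃ (hxA : S.closure x ∈ A.domain) (hxB : S.closure x ∈ B.domain),
        A ⟨S.closure x, hxA⟩ + B ⟨S.closure x, hxB⟩ = (x : X) := by
    intro x
    obtain ⟨hyA, hyB, hA, hB, hs⟩ := main (x : X) (S.closure x) (hgraph x)
    exact ⟨hyA, hyB, by rw [hA, hB, hs]⟩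
  refine ⟨⟨TA, hTA⟩, ⟨TB, hTB⟩, hclos, ?_, claim5⟩
  -- Step 5: injectivity of the closure.
  intro x hx0
  obtain ⟨hxA, hxB, hsum⟩ := claim5 x
  rw [← hsum]
  have eA : (⟨S.closure x, hxA⟩ : A.domain) = 0 := Subtype.ext hx0
  have eB : (⟨S.closure x, hxB⟩ : B.domain) = 0 := Subtype.ext hx0
  rw [eA, eB]
  simp
end

section
/- Let X be a Banach space and let A and B be closed injective linear operators in X with ρ(A) ≠ ∅ and ρ(B) ≠ ∅. Let S be a densely defined linear operator in X with R(S) ⊆ D(A) ∩ D(B), such that (A+B)Sx = x for all x ∈ D(S), such that at least one of AS, BS admits a bounded extension in L(X), and such that S commutes with the resolvents of A and of B, in the sense that for every λ ∈ ρ(A), μ ∈ ρ(B) and every x ∈ D(S) one has R(λ,A)x ∈ D(S), R(μ,B)x ∈ D(S), S R(λ,A)x = R(λ,A)Sx and S R(μ,B)x = R(μ,B)Sx. If the closure \overline{S} of S is a bounded operator on X (i.e. D(\overline{S}) = X and \overline{S} ∈ L(X)), then A + B with domain D(A) ∩ D(B) is closed and injective, A + B maps D(A) ∩ D(B) bijectively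 onto X, and (A+B)^{-1} = \overline{S}. -/
/- STATEMENT 1: Lemma 2 of the paper, first case (the closure of `S` is bounded).
Unbounded operators in a Banach space `X` are formalized as `LinearPMap`s `X →ₗ.[ℂ] X`.
`IsResolvent A lam R` expresses that `lam` belongs to the resolvent set of `A`, with
resolvent operator `R = (lam - A)⁻¹ ∈ L(X)`. -/

/-- `R ∈ L(X)` is the resolvent `(lam - A)⁻¹` of the unbounded operator `A`. -/
structure IsResolvent {X : Type*} [NormedAddCommGroup X] [NormedSpace ℂ X]
    (A : X →ₗ.[ℂ] X) (lam : ℂ) (R : X →L[ℂ] X) : Prop where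
  mem : ∀ x : X, R x ∈ A.domain
  right_inv : ∀ x : X, lam • R x - A ⟨R x, mem x⟩ = x
  left_inv : ∀ y : A.domain, R (lam • (y : X) - A y) = (y : X)

theorem stmt_1 {X : Type*} [NormedAddCommGroup X] [NormedSpace ℂ X] [CompleteSpace X]
    (A B S : X →ₗ.[ℂ] X)
    (hAclosed : A.IsClosed) (hBclosed : B.IsClosed)
    (hAinj : ∀ x : A.domain, A x = 0 → (x : X) = 0)
    (hBinj : ∀ x : B.domain, B x = 0 → (x : X) = 0)
    -- ρ(A) ≠ ∅ and ρ(B) ≠ ∅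
    (hAres : ∃ (lam : ℂ) (R : X →L[ℂ] X), IsResolvent A lam R)
    (hBres : ∃ (mu : ℂ) (R : X →L[ℂ] X), IsResolvent B mu R)
    -- S is densely defined, R(S) ⊆ D(A) ∩ D(B), (A+B)Sx = x on D(S)
    (hSdense : Dense (S.domain : Set X))
    (hSA : ∀ x : S.domain, S x ∈ A.domain)
    (hSB : ∀ x : S.domain, S x ∈ B.domain)
    (hABS : ∀ x : S.domain, A ⟨S x, hSA x⟩ + B ⟨S x, hSB x⟩ = (x : X))
    -- at least one of AS, BS admits a bounded extension
    (hbdd : (∃ T : X →L[ℂ] X, ∀ x : S.domain, T (x : X) = A ⟨S x, hSA x⟩) ∨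
            (∃ T : X →L[ℂ] X, ∀ x : S.domain, T (x : X) = B ⟨S x, hSB x⟩))
    -- S commutes with the resolvents of A and of B
    (hScommA : ∀ (lam : ℂ) (R : X →L[ℂ] X), IsResolvent A lam R →
      ∀ x : S.domain, ∃ h : R (x : X) ∈ S.domain, S ⟨R (x : X), h⟩ = R (S x))
    (hScommB : ∀ (mu : ℂ) (R : X →L[ℂ] X), IsResolvent B mu R →
      ∀ x : S.domain, ∃ h : R (x : X) ∈ S.domain, S ⟨R (x : X), h⟩ = R (S x))
    -- the closure of S is a bounded (everywhere defined) operator T ∈ L(X)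
    (hclosable : S.IsClosable)
    (T : X →L[ℂ] X)
    (hdomT : S.closure.domain = ⊤)
    (hT : ∀ x : S.closure.domain, S.closure x = T (x : X)) :
    -- A + B (with domain D(A) ∩ D(B)) is closed,
    (A + B).IsClosed ∧
    -- injective,
    (∀ x : (A + B).domain, (A + B) x = 0 → (x : X) = 0) ∧
    -- maps D(A) ∩ D(B) bijectively onto X,
    (∀ y : X, ∃ x : (A + B).domain, (A + B) x = y) ∧
    -- and (A+B)⁻¹ = the closure of S (= T)
    (∀ x : (A + B).domain, T ((A + B) x) = (x : X)) ∧
    (∀ y : X, ∃ h : T y ∈ (A + B).domain, (A + B) ⟨T y, h⟩ = y) := by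
  obtain ⟨lam, RA, hRA⟩ := hAres
  obtain ⟨mu, RB, hRB⟩ := hBres
  -- T extends S
  have hTS : ∀ x : S.domain, T (x : X) = S x := by
    intro x
    have h1 := S.le_closure
    have hm : (x : X) ∈ S.closure.domain := h1.1 x.2
    have h2 : S x = S.closure ⟨(x : X), hm⟩ := h1.2 (x := x) (y := ⟨(x : X), hm⟩) rfl
    rw [h2, hT]
  -- the bounded extensions of AS and BS
  obtain ⟨TA, TB, hTA, hTB, hsum⟩ :
      ∃ TA TB : X →L[ℂ] X, (∀ x : S.domain, TA (x : X) = A ⟨S x, hSA x⟩) ∧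
        (∀ x : S.domain, TB (x : X) = B ⟨S x, hSB x⟩) ∧ TA + TB = 1 := by
    rcases hbdd with ⟨T0, h0⟩ | ⟨T0, h0⟩
    · refine ⟨T0, 1 - T0, h0, fun x => ?_, by abel⟩
      have h1 := hABS x
      simp only [ContinuousLinearMap.sub_apply, ContinuousLinearMap.one_apply, h0 x]
      rw [← h1]; abel
    · refine ⟨1 - T0, T0, fun x => ?_, h0, by abel⟩
      have h1 := hABS x
      simp only [ContinuousLinearMap.sub_apply, ContinuousLinearMap.one_apply, h0 x]
      rw [← h1]; abel
  -- graph limits: (T y, TC y) ∈ graph C for all y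
  have graphmem : ∀ (C : X →ₗ.[ℂ] X), C.IsClosed → ∀ TC : X →L[ℂ] X,
      (∀ x : S.domain, ((T (x : X)), TC (x : X)) ∈ C.graph) →
      ∀ y : X, (T y, TC y) ∈ C.graph := by
    intro C hC TC hx y
    have hcont : Continuous fun z : X => (T z, TC z) :=
      T.continuous.prodMk TC.continuous
    have himg : (fun z : X => (T z, TC z)) '' (S.domain : Set X) ⊆ (C.graph : Set (X × X)) := by
      rintro _ ⟨z, hz, rfl⟩; exact hx ⟨z, hz⟩
    have h1 : (T y, TC y) ∈ (fun z : X => (T z, TC z)) '' closure (S.domain : Set X) :=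
      ⟨y, hSdense y, rfl⟩
    exact hC.closure_subset (closure_mono himg (image_closure_subset_closure_image hcont h1))
  have evA : ∀ y : X, ∃ h : T y ∈ A.domain, A ⟨T y, h⟩ = TA y := by
    intro y
    have h1 := graphmem A hAclosed TA (fun x => by
      rw [hTS x, hTA x]; exact A.mem_graph ⟨S x, hSA x⟩) y
    rw [LinearPMap.mem_graph_iff] at h1
    obtain ⟨u, hu1, hu2⟩ := h1
    have hu1' : (u : X) = T y := hu1
    have hu2' : A u = TA y := hu2
    refine ⟨hu1' ▸ u.2, ?_⟩
    rw [← hu2']; congr 1; exact Subtype.ext hu1'.symm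
  have evB : ∀ y : X, ∃ h : T y ∈ B.domain, B ⟨T y, h⟩ = TB y := by
    intro y
    have h1 := graphmem B hBclosed TB (fun x => by
      rw [hTS x, hTB x]; exact B.mem_graph ⟨S x, hSB x⟩) y
    rw [LinearPMap.mem_graph_iff] at h1
    obtain ⟨u, hu1, hu2⟩ := h1
    have hu1' : (u : X) = T y := hu1
    have hu2' : B u = TB y := hu2
    refine ⟨hu1' ▸ u.2, ?_⟩
    rw [← hu2']; congr 1; exact Subtype.ext hu1'.symm
  -- T commutes with resolvents
  have hcomm : ∀ (R : X →L[ℂ] X),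
      (∀ x : S.domain, ∃ h : R (x : X) ∈ S.domain, S ⟨R (x : X), h⟩ = R (S x)) →
      ∀ y : X, T (R y) = R (T y) := by
    intro R hR
    have heq : Set.EqOn (fun y => T (R y)) (fun y => R (T y)) (S.domain : Set X) := by
      rintro z hz
      obtain ⟨h, he⟩ := hR ⟨z, hz⟩
      show T (R z) = R (T z)
      rw [hTS ⟨R z, h⟩, he, hTS ⟨z, hz⟩]
    have := Continuous.ext_on hSdense (T.continuous.comp R.continuous)
      (R.continuous.comp T.continuous) heq
    exact fun y => congrFun (congrArg (fun f => f) this) y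
  have hcommA : ∀ y : X, T (RA y) = RA (T y) := hcomm RA (hScommA lam RA hRA)
  have hcommB : ∀ y : X, T (RB y) = RB (T y) := hcomm RB (hScommB mu RB hRB)
  -- T ∘ C = TC on D(C)
  have main : ∀ (C : X →ₗ.[ℂ] X) (l : ℂ) (R TC : X →L[ℂ] X),
      IsResolvent C l R →
      (∀ y : X, ∃ h : T y ∈ C.domain, C ⟨T y, h⟩ = TC y) →
      (∀ y : X, T (R y) = R (T y)) →
      ∀ u : C.domain, T (C u) = TC (u : X) := by
    intro C l R TC hR hev hcm u
    set z := l • (u : X) - C u with hz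
    have h1 : R z = (u : X) := hR.left_inv u
    have h2 : T (u : X) = R (T z) := by rw [← h1, hcm]
    obtain ⟨hm, he⟩ := hev (u : X)
    have h3 : C ⟨T (u : X), hm⟩ = l • R (T z) - T z := by
      have h4 := hR.right_inv (T z)
      have h5 : C ⟨T (u : X), hm⟩ = C ⟨R (T z), hR.mem (T z)⟩ := by
        congr 1; exact Subtype.ext h2
      have h4' : l • R (T z) = T z + C ⟨R (T z), hR.mem (T z)⟩ :=
        sub_eq_iff_eq_add.mp h4
      rw [h5, h4', add_sub_cancel_left]
    have h5 : T z = l • T (u : X) - T (C u) := by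
      rw [hz, map_sub, map_smul]
    rw [← he, h3, ← h2, h5, sub_sub_cancel]
  have hTAu : ∀ u : A.domain, T (A u) = TA (u : X) := main A lam RA TA hRA evA hcommA
  have hTBu : ∀ u : B.domain, T (B u) = TB (u : X) := main B mu RB TB hRB evB hcommB
  -- left inverse: T ((A+B) x) = x
  have hleft : ∀ x : (A + B).domain, T ((A + B) x) = (x : X) := by
    intro x
    have hx : (x : X) ∈ A.domain ⊓ B.domain := x.2
    have h1 : (A + B) x = A ⟨(x : X), hx.1⟩ + B ⟨(x : X), hx.2⟩ :=
      LinearPMap.add_apply A B x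
    rw [h1, map_add, hTAu ⟨(x : X), hx.1⟩, hTBu ⟨(x : X), hx.2⟩]
    have := congrFun (congrArg (fun (f : X →L[ℂ] X) (v : X) => f v) hsum) (x : X)
    simpa using this
  -- right inverse: (A+B)(T y) = y
  have hright : ∀ y : X, ∃ h : T y ∈ (A + B).domain, (A + B) ⟨T y, h⟩ = y := by
    intro y
    obtain ⟨hmA, heA⟩ := evA y
    obtain ⟨hmB, heB⟩ := evB y
    have hm : T y ∈ (A + B).domain := (⟨hmA, hmB⟩ : T y ∈ A.domain ⊓ B.domain)
    refine ⟨hm, ?_⟩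
    have h1 : (A + B) ⟨T y, hm⟩ = A ⟨T y, hmA⟩ + B ⟨T y, hmB⟩ :=
      LinearPMap.add_apply A B ⟨T y, ⟨hmA, hmB⟩⟩
    rw [h1, heA, heB]
    have := congrFun (congrArg (fun (f : X →L[ℂ] X) (v : X) => f v) hsum) y
    simpa using this
  refine ⟨?_, ?_, ?_, hleft, hright⟩
  · -- closedness
    have hgr : ((A + B).graph : Set (X × X)) = {p : X × X | T p.2 = p.1} := by
      ext p
      simp only [SetLike.mem_coe, LinearPMap.mem_graph_iff, Set.mem_setOf_eq]
      constructor
      · rintro ⟨u, h1, h2⟩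
        rw [← h1, ← h2]; exact hleft u
      · intro hp
        obtain ⟨h, he⟩ := hright p.2
        exact ⟨⟨T p.2, h⟩, hp, he⟩
    rw [LinearPMap.IsClosed, hgr]
    exact isClosed_eq (T.continuous.comp continuous_snd) continuous_fst
  · -- injectivity
    intro x hx
    have h1 := hleft x
    rw [hx, map_zero] at h1
    exact h1.symm
  · -- surjectivity
    intro y
    obtain ⟨h, he⟩ := hright y
    exact ⟨⟨T y, h⟩, he⟩
end

section
/- Let X be a Banach space and let A and B be closed injective linear operators in X. Let S be a densely defined linear operator in X with R(S) ⊆ D(A) ∩ D(B), such that (A+B)Sx = x for all x ∈ D(S), such that at least one of AS, BS admits a bounded extension in L(X), and such that S commutes with the resolvents of A and of B (for λ ∈ ρ(A), μ ∈ ρ(B), x ∈ D(S): R(λ,A)x, R(μ,B)x ∈ D(S), S R(λ,A)x = R(λ,A)Sx, S R(μ,B)x = R(μ,B)Sx). Suppose there exists λ ∈ ℂ with λ ∈ ρ(A) and −λ ∈ ρ(B) such that the set R(λ,A)(λ+B)^{-1}(D(\overline{S})) is a core for A + B. Then A + B with domain D(A) ∩ D(B) is closed and injective and \overline{S} = (A+B)^{-1},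 i.e. D(\overline{S}) = R(A+B) and \overline{S}(A+B)x = x for all x ∈ D(A) ∩ D(B) and (A+B)\overline{S}y = y for all y ∈ D(\overline{S}). -/
/-- `R ∈ L(X)` is the bounded inverse `(lam + B)⁻¹` of `lam + B` (equivalently, `-lam ∈ ρ(B)`). -/
structure IsPlusInv {X : Type*} [NormedAddCommGroup X] [NormedSpace ℂ X]
    (B : X →ₗ.[ℂ] X) (lam : ℂ) (R : X →L[ℂ] X) : Prop where
  mem : ∀ x : X, R x ∈ B.domain
  right_inv : ∀ x : X, lam • R x + B ⟨R x, mem x⟩ = x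
  left_inv : ∀ y : B.domain, R (lam • (y : X) + B y) = (y : X)

open Filter Topology

namespace LinearPMap

section Algebraic

variable {R E F G : Type*} [Ring R] [AddCommGroup E] [Module R E]
  [AddCommGroup F] [Module R F] [AddCommGroup G] [Module R G]

theorem mem_graph_of_comp_eq {S : E →ₗ.[R] F} {A : F →ₗ.[R] G} {T : E → G}
    (hSA : ∀ x : S.domain, S x ∈ A.domain) (hT : ∀ x : S.domain, T x = A ⟨S x, hSA x⟩) :
    ∀ p ∈ S.graph, (p.2, T p.1) ∈ A.graph := by
  rintro ⟨x, y⟩ hp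
  obtain ⟨z, rfl, rfl⟩ := S.mem_graph_iff.mp hp
  rw [hT z]
  exact A.mem_graph ⟨_, hSA z⟩

theorem add_mem_graph {A B : E →ₗ.[R] F} {x : E} {a b : F} (ha : (x, a) ∈ A.graph)
    (hb : (x, b) ∈ B.graph) : (x, a + b) ∈ (A + B).graph := by
  have hxA := mem_domain_of_mem_graph ha
  have hxB := mem_domain_of_mem_graph hb
  rw [← image_iff hxA] at ha
  rw [← image_iff hxB] at hb
  rw [← image_iff (show x ∈ A.domain ⊓ B.domain from ⟨hxA, hxB⟩), add_apply, ha, hb]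

theorem swap_mem_graph_add {A B C : E →ₗ.[R] E} {TA TB : E → E} (hT : ∀ t, TA t + TB t = t)
    (hCA : ∀ p ∈ C.graph, (p.2, TA p.1) ∈ A.graph) (hCB : ∀ p ∈ C.graph, (p.2, TB p.1) ∈ B.graph)
    {z c : E} (hzc : (z, c) ∈ C.graph) : (c, z) ∈ (A + B).graph := by
  simpa only [hT] using add_mem_graph (hCA _ hzc) (hCB _ hzc)

def Commutes (S : E →ₗ.[R] E) (T : E → E) : Prop :=
  ∀ p ∈ S.graph, (T p.1, T p.2) ∈ S.graph

theorem commutes_of_forall {S : E →ₗ.[R] E} {T : E → E}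
    (h : ∀ x : S.domain, ∃ hx : T x ∈ S.domain, S ⟨T x, hx⟩ = T (S x)) : S.Commutes T := by
  rintro ⟨x, y⟩ hp
  obtain ⟨z, rfl, rfl⟩ := S.mem_graph_iff.mp hp
  obtain ⟨hz, e⟩ := h z
  rw [← e]
  exact S.mem_graph ⟨_, hz⟩

theorem Commutes.of_neg {S : E →ₗ.[R] E} {T : E → E} (h : S.Commutes (-T)) : S.Commutes T :=
  fun p hp => by simpa using neg_mem (h p hp)

end Algebraic

section Topological

variable {R E F G : Type*} [CommRing R] [TopologicalSpace R]
  [AddCommGroup E] [Module R E] [TopologicalSpace E] [ContinuousAdd E] [ContinuousSMul R E]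
  [AddCommGroup F] [Module R F] [TopologicalSpace F] [ContinuousAdd F] [ContinuousSMul R F]
  [AddCommGroup G] [Module R G] [TopologicalSpace G]

theorem mem_graph_of_mem_closure_graph {S : E →ₗ.[R] F} {A : F →ₗ.[R] G} {T : E → G}
    (hA : A.IsClosed) (hT : Continuous T) (hST : ∀ p ∈ S.graph, (p.2, T p.1) ∈ A.graph) :
    ∀ p ∈ S.graph.topologicalClosure, (p.2, T p.1) ∈ A.graph :=
  fun _ hp => closure_minimal hST (IsClosed.preimage (by fun_prop) hA) hp

theorem isClosable_of_comp_eq {S : E →ₗ.[R] F} {A : F →ₗ.[R] G} {T : E →L[R] G}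
    (hA : A.IsClosed) (hAinj : ∀ y : A.domain, A y = 0 → (y : F) = 0)
    (hST : ∀ p ∈ S.graph, (p.2, T p.1) ∈ A.graph) : S.IsClosable := by
  refine ⟨S.graph.topologicalClosure.toLinearPMap,
    (Submodule.toLinearPMap_graph_eq _ fun p hp hp0 => ?_).symm⟩
  have hpA := mem_graph_of_mem_closure_graph hA T.continuous hST p hp
  rw [hp0, T.map_zero] at hpA
  obtain ⟨y, hy, hy0⟩ := A.mem_graph_iff.mp hpA
  exact hy.symm.trans (hAinj y hy0)

theorem IsClosable.mem_graph_of_closure {S : E →ₗ.[R] F} {A : F →ₗ.[R] G} {T : E → G}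
    (hS : S.IsClosable) (hA : A.IsClosed) (hT : Continuous T)
    (hST : ∀ p ∈ S.graph, (p.2, T p.1) ∈ A.graph) :
    ∀ p ∈ S.closure.graph, (p.2, T p.1) ∈ A.graph := by
  rw [← hS.graph_closure_eq_closure_graph]
  exact mem_graph_of_mem_closure_graph hA hT hST

theorem Commutes.closure {S : E →ₗ.[R] E} {T : E →L[R] E} (hS : S.IsClosable)
    (h : S.Commutes T) : S.closure.Commutes T := by
  intro p hp
  rw [← hS.graph_closure_eq_closure_graph] at hp ⊢
  exact map_mem_closure (f := Prod.map T T) (by fun_prop) hp h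

end Topological

section Transpose

variable {R E : Type*} [CommRing R] [AddCommGroup E] [Module R E] [TopologicalSpace E]
  {T C : E →ₗ.[R] E}

theorem swap_mem_graph_of_core (hC : C.IsClosed) {P : Set E}
    (hcore : ∀ x : T.domain, ∃ u : ℕ → T.domain, (∀ n, (u n : E) ∈ P) ∧
      Tendsto (fun n => (u n : E)) atTop (𝓝 x) ∧ Tendsto (fun n => T (u n)) atTop (𝓝 (T x)))
    (hP : ∀ x : T.domain, (x : E) ∈ P → (T x, (x : E)) ∈ C.graph) (x : T.domain) :
    (T x, (x : E)) ∈ C.graph := by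
  obtain ⟨u, huP, hu, hTu⟩ := hcore x
  exact IsClosed.mem_of_tendsto hC (hTu.prodMk_nhds hu) (Eventually.of_forall fun n => hP _ (huP n))

theorem isClosed_of_mem_graph_iff_swap (hC : C.IsClosed)
    (h : ∀ x y, (x, y) ∈ T.graph ↔ (y, x) ∈ C.graph) : T.IsClosed := by
  have hT : (T.graph : Set (E × E)) = Prod.swap ⁻¹' C.graph := Set.ext fun p => h p.1 p.2
  rw [LinearPMap.IsClosed, hT]
  exact IsClosed.preimage continuous_swap hC

end Transpose

end LinearPMap

section Resolvent

variable {X : Type*} [NormedAddCommGroup X] [NormedSpace ℂ X] {A B : X →ₗ.[ℂ] X} {lam : ℂ}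
  {R : X →L[ℂ] X}

theorem IsResolvent.apply_smul_sub (hR : IsResolvent A lam R) {y z : X} (h : (y, z) ∈ A.graph) :
    R (lam • y - z) = y := by
  obtain ⟨w, rfl, rfl⟩ := A.mem_graph_iff.mp h
  exact hR.left_inv w

theorem IsPlusInv.smul_apply_add_apply (hR : IsPlusInv B lam R) {y z : X}
    (h : (y, z) ∈ B.graph) : lam • R y + R z = y := by
  obtain ⟨w, rfl, rfl⟩ := B.mem_graph_iff.mp h
  rw [← R.map_smul, ← R.map_add, hR.left_inv w]

theorem IsPlusInv.apply_mem_graph (hR : IsPlusInv B lam R) (x : X) :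
    (R x, x - lam • R x) ∈ B.graph :=
  (LinearPMap.image_iff (hR.mem x)).mp (eq_sub_of_add_eq' (hR.right_inv x)).symm

theorem IsPlusInv.isResolvent_neg (hR : IsPlusInv B lam R) : IsResolvent B (-lam) (-R) where
  mem x := by simpa using neg_mem (hR.mem x)
  right_inv x := by
    have hx : ((-R) x, -(x - lam • R x)) ∈ B.graph := by simpa using neg_mem (hR.apply_mem_graph x)
    rw [← (LinearPMap.image_iff _).mpr hx, neg_apply]
    module
  left_inv y := by
    rw [neg_apply, show (-lam) • (y : X) - B y = -(lam • y + B y) by module,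
      map_neg, neg_neg, hR.left_inv]

theorem IsPlusInv.apply_comm_of_dense {S : X →ₗ.[ℂ] X} {T : X →L[ℂ] X} (hR : IsPlusInv B lam R)
    (hS : Dense (S.domain : Set X)) (hST : ∀ p ∈ S.graph, (p.2, T p.1) ∈ B.graph)
    (hSR : S.Commutes R) (t : X) : T (R t) = R (T t) := by
  refine congrFun (Continuous.ext_on hS (f := fun t => T (R t)) (g := fun t => R (T t))
    (by fun_prop) (by fun_prop) fun t ht => ?_) t
  have hts := S.mem_graph ⟨t, ht⟩
  have hRs := hR.smul_apply_add_apply (hST _ hts)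
  calc T (R t) = S ⟨t, ht⟩ - lam • R (S ⟨t, ht⟩) :=
        B.mem_graph_snd_inj (hST _ (hSR _ hts)) (hR.apply_mem_graph _) rfl
    _ = R (T t) := (eq_sub_of_add_eq' hRs).symm

end Resolvent

section Sum

variable {X : Type*} [NormedAddCommGroup X] [NormedSpace ℂ X] {A B C : X →ₗ.[ℂ] X}
  {TA TB : X →L[ℂ] X}

theorem LinearPMap.exists_sum_eq_of_comp_bounded {S : X →ₗ.[ℂ] X}
    (hSA : ∀ x : S.domain, S x ∈ A.domain) (hSB : ∀ x : S.domain, S x ∈ B.domain)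
    (hABS : ∀ x : S.domain, A ⟨S x, hSA x⟩ + B ⟨S x, hSB x⟩ = (x : X))
    (hbdd : (∃ T : X →L[ℂ] X, ∀ x : S.domain, T (x : X) = A ⟨S x, hSA x⟩) ∨
      (∃ T : X →L[ℂ] X, ∀ x : S.domain, T (x : X) = B ⟨S x, hSB x⟩)) :
    ∃ TA TB : X →L[ℂ] X, (∀ t, TA t + TB t = t) ∧
      (∀ p ∈ S.graph, (p.2, TA p.1) ∈ A.graph) ∧ (∀ p ∈ S.graph, (p.2, TB p.1) ∈ B.graph) := by
  rcases hbdd with ⟨T, hT⟩ | ⟨T, hT⟩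
  · refine ⟨T, 1 - T, by simp, mem_graph_of_comp_eq hSA hT, mem_graph_of_comp_eq hSB fun x => ?_⟩
    show (x : X) - T x = _
    exact hT x ▸ sub_eq_of_eq_add' (hABS x).symm
  · refine ⟨1 - T, T, by simp, mem_graph_of_comp_eq hSA fun x => ?_, mem_graph_of_comp_eq hSB hT⟩
    show (x : X) - T x = _
    exact hT x ▸ sub_eq_of_eq_add (hABS x).symm

theorem LinearPMap.mem_graph_of_resolvent_comp {lam : ℂ} {RA RB : X →L[ℂ] X}
    (hRA : IsResolvent A lam RA) (hRB : IsPlusInv B lam RB) (hT : ∀ t, TA t + TB t = t)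
    (hTARB : ∀ t, TA (RB t) = RB (TA t))
    (hCA : ∀ p ∈ C.graph, (p.2, TA p.1) ∈ A.graph) (hCB : ∀ p ∈ C.graph, (p.2, TB p.1) ∈ B.graph)
    (hCRA : C.Commutes RA) (hCRB : C.Commutes RB) {z c : X} (hzc : (z, c) ∈ C.graph) :
    (RA z - RB z, RA (RB z)) ∈ C.graph := by
  have hRBc : (RB c, RB (TA z)) ∈ A.graph := by simpa [hTARB] using hCA _ (hCRB _ hzc)
  have hc : lam • RB c + RB (TB z) = c := hRB.smul_apply_add_apply (hCB _ hzc)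
  have hRBz : RB z = c - (lam • RB c - RB (TA z)) := by
    conv_lhs => rw [← hT z]
    rw [RB.map_add, eq_sub_of_add_eq' hc]
    abel
  have hRARB : RA (RB z) = RA c - RB c := by rw [hRBz, RA.map_sub, hRA.apply_smul_sub hRBc]
  rw [hRARB]
  exact sub_mem (hCRA _ hzc) (hCRB _ hzc)

theorem LinearPMap.mem_graph_add_iff_of_core {lam : ℂ} {RA RB : X →L[ℂ] X} (hC : C.IsClosed)
    (hRA : IsResolvent A lam RA) (hRB : IsPlusInv B lam RB) (hT : ∀ t, TA t + TB t = t)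
    (hTARB : ∀ t, TA (RB t) = RB (TA t))
    (hCA : ∀ p ∈ C.graph, (p.2, TA p.1) ∈ A.graph) (hCB : ∀ p ∈ C.graph, (p.2, TB p.1) ∈ B.graph)
    (hCRA : C.Commutes RA) (hCRB : C.Commutes RB)
    (hcore : ∀ x : (A + B).domain, ∃ u : ℕ → (A + B).domain,
      (∀ n, (u n : X) ∈ (fun y => RA (RB y)) '' (C.domain : Set X)) ∧
      Tendsto (fun n => (u n : X)) atTop (𝓝 x) ∧
      Tendsto (fun n => (A + B) (u n)) atTop (𝓝 ((A + B) x)))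
    (x y : X) : (x, y) ∈ (A + B).graph ↔ (y, x) ∈ C.graph := by
  refine ⟨fun hxy => ?_, swap_mem_graph_add hT hCA hCB⟩
  obtain ⟨x, rfl, rfl⟩ := (A + B).mem_graph_iff.mp hxy
  refine swap_mem_graph_of_core hC hcore (fun u ⟨z, hz, hzu⟩ => ?_) x
  obtain ⟨c, hzc⟩ := mem_domain_iff.mp hz
  have hu : (RA z - RB z, (u : X)) ∈ C.graph :=
    hzu ▸ mem_graph_of_resolvent_comp hRA hRB hT hTARB hCA hCB hCRA hCRB hzc
  rwa [(A + B).mem_graph_snd_inj ((A + B).mem_graph u) (swap_mem_graph_add hT hCA hCB hu) rfl]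

end Sum

open LinearPMap in
theorem stmt_2_general {X : Type*} [NormedAddCommGroup X] [NormedSpace ℂ X]
    (A B S : X →ₗ.[ℂ] X)
    (hAclosed : A.IsClosed) (hBclosed : B.IsClosed)
    (hAinj : ∀ x : A.domain, A x = 0 → (x : X) = 0)
    -- S is densely defined, R(S) ⊆ D(A) ∩ D(B), (A+B)Sx = x on D(S)
    (hSdense : Dense (S.domain : Set X))
    (hSA : ∀ x : S.domain, S x ∈ A.domain)
    (hSB : ∀ x : S.domain, S x ∈ B.domain)
    (hABS : ∀ x : S.domain, A ⟨S x, hSA x⟩ + B ⟨S x, hSB x⟩ = (x : X))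
    -- at least one of AS, BS admits a bounded extension
    (hbdd : (∃ T : X →L[ℂ] X, ∀ x : S.domain, T (x : X) = A ⟨S x, hSA x⟩) ∨
            (∃ T : X →L[ℂ] X, ∀ x : S.domain, T (x : X) = B ⟨S x, hSB x⟩))
    -- S commutes with the resolvents of A and of B
    (hScommA : ∀ (lam : ℂ) (R : X →L[ℂ] X), IsResolvent A lam R →
      ∀ x : S.domain, ∃ h : R (x : X) ∈ S.domain, S ⟨R (x : X), h⟩ = R (S x))
    (hScommB : ∀ (mu : ℂ) (R : X →L[ℂ] X), IsResolvent B mu R →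
      ∀ x : S.domain, ∃ h : R (x : X) ∈ S.domain, S ⟨R (x : X), h⟩ = R (S x))
    -- there is λ ∈ ρ(A) with −λ ∈ ρ(B) such that R(λ,A)(λ+B)⁻¹(D(S̄)) is a core for A+B
    (lam : ℂ) (RA RB : X →L[ℂ] X)
    (hRA : IsResolvent A lam RA) (hRB : IsPlusInv B lam RB)
    (hcore : ∀ x : (A + B).domain, ∃ u : ℕ → (A + B).domain,
      (∀ n, (u n : X) ∈ (fun y => RA (RB y)) '' (S.closure.domain : Set X)) ∧
      Filter.Tendsto (fun n => ((u n : X))) Filter.atTop (nhds (x : X)) ∧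
      Filter.Tendsto (fun n => (A + B) (u n)) Filter.atTop (nhds ((A + B) x))) :
    -- S is closable, A + B (with domain D(A) ∩ D(B)) is closed and injective,
    S.IsClosable ∧
    (A + B).IsClosed ∧
    (∀ x : (A + B).domain, (A + B) x = 0 → (x : X) = 0) ∧
    -- and S̄ = (A+B)⁻¹: D(S̄) = R(A+B),
    ((S.closure.domain : Set X) = Set.range (fun x : (A + B).domain => (A + B) x)) ∧
    -- S̄(A+B)x = x for all x ∈ D(A) ∩ D(B),
    (∀ x : (A + B).domain, ∃ h : (A + B) x ∈ S.closure.domain,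
      S.closure ⟨(A + B) x, h⟩ = (x : X)) ∧
    -- and (A+B)S̄y = y for all y ∈ D(S̄)
    (∀ y : S.closure.domain, ∃ h : S.closure y ∈ (A + B).domain,
      (A + B) ⟨S.closure y, h⟩ = (y : X)) := by
  obtain ⟨TA, TB, hT, hSTA, hSTB⟩ := exists_sum_eq_of_comp_bounded hSA hSB hABS hbdd
  have hS : S.IsClosable := isClosable_of_comp_eq hAclosed hAinj hSTA
  have hSRB : S.Commutes RB :=
    (commutes_of_forall (by simpa using hScommB _ _ hRB.isResolvent_neg)).of_neg
  have hTARB : ∀ t, TA (RB t) = RB (TA t) := fun t => by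
    rw [eq_sub_of_add_eq (hT (RB t)), hRB.apply_comm_of_dense hSdense hSTB hSRB,
      ← RB.map_sub, ← eq_sub_of_add_eq (hT t)]
  have hCA := hS.mem_graph_of_closure hAclosed TA.continuous hSTA
  have hCB := hS.mem_graph_of_closure hBclosed TB.continuous hSTB
  have hgraph := mem_graph_add_iff_of_core hS.closure_isClosed hRA hRB hT hTARB hCA hCB
    ((commutes_of_forall (hScommA lam RA hRA)).closure hS) (hSRB.closure hS) hcore
  refine ⟨hS, isClosed_of_mem_graph_iff_swap hS.closure_isClosed hgraph,
    fun x hx => graph_fst_eq_zero_snd _ ((hgraph _ _).mp (mem_graph _ x)) hx,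
    Set.ext fun t => mem_domain_iff.trans
      ((exists_congr fun x => (hgraph x t).symm).trans mem_range_iff.symm),
    fun x => ?_, fun y => ?_⟩
  · have hx := (hgraph _ _).mp ((A + B).mem_graph x)
    exact ⟨mem_domain_of_mem_graph hx, ((image_iff _).mpr hx).symm⟩
  · have hy := (hgraph _ _).mpr (S.closure.mem_graph y)
    exact ⟨mem_domain_of_mem_graph hy, ((image_iff _).mpr hy).symm⟩

theorem stmt_2 {X : Type*} [NormedAddCommGroup X] [NormedSpace ℂ X] [CompleteSpace X]
    (A B S : X →ₗ.[ℂ] X)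
    (hAclosed : A.IsClosed) (hBclosed : B.IsClosed)
    (hAinj : ∀ x : A.domain, A x = 0 → (x : X) = 0)
    (hBinj : ∀ x : B.domain, B x = 0 → (x : X) = 0)
    -- S is densely defined, R(S) ⊆ D(A) ∩ D(B), (A+B)Sx = x on D(S)
    (hSdense : Dense (S.domain : Set X))
    (hSA : ∀ x : S.domain, S x ∈ A.domain)
    (hSB : ∀ x : S.domain, S x ∈ B.domain)
    (hABS : ∀ x : S.domain, A ⟨S x, hSA x⟩ + B ⟨S x, hSB x⟩ = (x : X))
    -- at least one of AS, BS admits a bounded extension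
    (hbdd : (∃ T : X →L[ℂ] X, ∀ x : S.domain, T (x : X) = A ⟨S x, hSA x⟩) ∨
            (∃ T : X →L[ℂ] X, ∀ x : S.domain, T (x : X) = B ⟨S x, hSB x⟩))
    -- S commutes with the resolvents of A and of B
    (hScommA : ∀ (lam : ℂ) (R : X →L[ℂ] X), IsResolvent A lam R →
      ∀ x : S.domain, ∃ h : R (x : X) ∈ S.domain, S ⟨R (x : X), h⟩ = R (S x))
    (hScommB : ∀ (mu : ℂ) (R : X →L[ℂ] X), IsResolvent B mu R →
      ∀ x : S.domain, ∃ h : R (x : X) ∈ S.domain, S ⟨R (x : X), h⟩ = R (S x))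
    -- there is λ ∈ ρ(A) with −λ ∈ ρ(B) such that R(λ,A)(λ+B)⁻¹(D(S̄)) is a core for A+B
    (lam : ℂ) (RA RB : X →L[ℂ] X)
    (hRA : IsResolvent A lam RA) (hRB : IsPlusInv B lam RB)
    (hcore : ∀ x : (A + B).domain, ∃ u : ℕ → (A + B).domain,
      (∀ n, (u n : X) ∈ (fun y => RA (RB y)) '' (S.closure.domain : Set X)) ∧
      Filter.Tendsto (fun n => ((u n : X))) Filter.atTop (nhds (x : X)) ∧
      Filter.Tendsto (fun n => (A + B) (u n)) Filter.atTop (nhds ((A + B) x))) :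
    -- S is closable, A + B (with domain D(A) ∩ D(B)) is closed and injective,
    S.IsClosable ∧
    (A + B).IsClosed ∧
    (∀ x : (A + B).domain, (A + B) x = 0 → (x : X) = 0) ∧
    -- and S̄ = (A+B)⁻¹: D(S̄) = R(A+B),
    ((S.closure.domain : Set X) = Set.range (fun x : (A + B).domain => (A + B) x)) ∧
    -- S̄(A+B)x = x for all x ∈ D(A) ∩ D(B),
    (∀ x : (A + B).domain, ∃ h : (A + B) x ∈ S.closure.domain,
      S.closure ⟨(A + B) x, h⟩ = (x : X)) ∧
    -- and (A+B)S̄y = y for all y ∈ D(S̄)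
    (∀ y : S.closure.domain, ∃ h : S.closure y ∈ (A + B).domain,
      (A + B) ⟨S.closure y, h⟩ = (y : X)) :=
  stmt_2_general A B S hAclosed hBclosed hAinj hSdense hSA hSB hABS hbdd hScommA hScommB lam RA RB
    hRA hRB hcore
end

section
/- Let β > α ≥ 0 be real numbers, let a ∈ ℂ ∖ (−∞, 0], and let s ∈ ℂ with −α < Re s < β − α. Then the function t ↦ t^{s+α−1}(a+t)^{−β} is absolutely integrable on (0, ∞) and ∫₀^∞ t^{s+α−1}(a+t)^{−β} dt = (a^{s+α−β} / Γ(β)) · Γ(s+α) · Γ(β−α−s). -/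
/-! With `w = s + α`, the substitution `t = v / (1 - v)` turns the integral for `a = 1` into the
Beta integral `B(w, β - w) = Γ(w) Γ(β - w) / Γ(β)`, and scaling `t ↦ x t` handles every `a = x > 0`.
Both sides are holomorphic in `a` on the slit plane: for the integral this follows by
differentiating under the integral sign, with the domination coming from
`‖a + t‖ ≥ c (1 + t)`, locally uniformly in `a`. The identity theorem extends the equality from
`(0, ∞)` to the whole slit plane. -/

open MeasureTheory Complex Set Filter Topology

namespace Complex

lemma mem_slitPlane_iff_forall_ne_ofReal {a : ℂ} : a ∈ slitPlane ↔ ∀ r : ℝ, r ≤ 0 → a ≠ r := by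
  rw [mem_slitPlane_iff_not_le_zero]
  constructor
  · rintro h r hr rfl
    exact h (by exact_mod_cast hr)
  · intro h hle
    obtain ⟨hre, him⟩ := le_def.mp hle
    exact h a.re hre (ext rfl (by simpa using him))

lemma add_ofReal_mem_slitPlane {a : ℂ} (ha : a ∈ slitPlane) {t : ℝ} (ht : 0 ≤ t) :
    a + t ∈ slitPlane := by
  rw [mem_slitPlane_iff] at ha ⊢
  simp only [add_re, ofReal_re, add_im, ofReal_im, add_zero]
  exact ha.imp (fun h => by linarith) id

lemma exists_mul_one_add_le_norm_add_ofReal {a : ℂ} (ha : a ∈ slitPlane) :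
    ∃ c > 0, ∀ t : ℝ, 0 ≤ t → c * (1 + t) ≤ ‖a + t‖ := by
  rcases mem_slitPlane_iff.mp ha with hre | him
  · refine ⟨min a.re 1, lt_min hre one_pos, fun t ht => ?_⟩
    calc min a.re 1 * (1 + t) ≤ a.re + t := by
          nlinarith [min_le_left a.re 1, min_le_right a.re 1]
      _ = (a + t).re := by simp
      _ ≤ ‖a + t‖ := re_le_norm _
  · -- near `0` the distance to the real axis helps, far out `‖a + t‖ ≥ t - ‖a‖` does
    have him' : 0 < |a.im| := abs_pos.mpr him
    refine ⟨|a.im| / (2 * (‖a‖ + 1)), by positivity, fun t ht => ?_⟩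
    have him_le : |a.im| ≤ ‖a‖ := abs_im_le_norm a
    have h_im : |a.im| ≤ ‖a + t‖ := by simpa using abs_im_le_norm (a + t)
    have h_far : t - ‖a‖ ≤ ‖a + t‖ := by
      have := norm_sub_norm_le (t : ℂ) (-a)
      rw [norm_neg, norm_real, Real.norm_of_nonneg ht, sub_neg_eq_add, add_comm] at this
      exact this
    rw [div_mul_eq_mul_div, div_le_iff₀ (by positivity)]
    rcases le_total t (2 * ‖a‖ + 1) with h | h <;> nlinarith [norm_nonneg (a + t)]

lemma exists_eventually_mul_one_add_le_norm_add_ofReal {a₀ : ℂ} (ha₀ : a₀ ∈ slitPlane) :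
    ∃ c > 0, ∀ᶠ a : ℂ in 𝓝 a₀, ∀ t : ℝ, 0 ≤ t → c * (1 + t) ≤ ‖a + t‖ := by
  obtain ⟨c, hc, hbound⟩ := exists_mul_one_add_le_norm_add_ofReal ha₀
  refine ⟨c / 2, half_pos hc, ?_⟩
  filter_upwards [Metric.ball_mem_nhds a₀ (half_pos hc)] with a ha t ht
  have hdist : ‖a - a₀‖ < c / 2 := mem_ball_iff_norm.mp ha
  have htri : ‖a₀ + t‖ ≤ ‖a + t‖ + ‖a - a₀‖ := by
    simpa [norm_sub_rev] using norm_le_norm_add_norm_sub' (a₀ + t) (a + t)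
  nlinarith [hbound t ht]

end Complex

section DivOneSub

lemma image_div_one_sub_Ioo : (fun v : ℝ => v / (1 - v)) '' Ioo 0 1 = Ioi 0 := by
  ext t
  constructor
  · rintro ⟨v, ⟨h0, h1⟩, rfl⟩
    exact div_pos h0 (by linarith)
  · intro ht
    have ht : 0 < t := ht
    refine ⟨t / (1 + t), ⟨by positivity, (div_lt_one (by positivity)).mpr (by linarith)⟩, ?_⟩
    field_simp
    ring

lemma injOn_div_one_sub_Ioo : InjOn (fun v : ℝ => v / (1 - v)) (Ioo 0 1) := by
  intro x hx y hy h
  have hx1 : 1 - x ≠ 0 := by linarith [hx.2]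
  have hy1 : 1 - y ≠ 0 := by linarith [hy.2]
  field_simp at h
  linarith

lemma hasDerivAt_div_one_sub {v : ℝ} (hv : v ≠ 1) :
    HasDerivAt (fun v : ℝ => v / (1 - v)) ((1 - v) ^ 2)⁻¹ v := by
  have hne : 1 - v ≠ 0 := sub_ne_zero.mpr hv.symm
  refine ((hasDerivAt_id' v).div ((hasDerivAt_id' v).const_sub 1) hne).congr_deriv ?_
  field_simp
  ring

variable {E : Type*} [NormedAddCommGroup E] [NormedSpace ℝ E]

lemma integrableOn_Ioi_iff_integrableOn_Ioo_div_one_sub (g : ℝ → E) :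
    IntegrableOn g (Ioi 0) ↔
      IntegrableOn (fun v : ℝ => ((1 - v) ^ 2)⁻¹ • g (v / (1 - v))) (Ioo 0 1) := by
  rw [← image_div_one_sub_Ioo, integrableOn_image_iff_integrableOn_abs_deriv_smul
    measurableSet_Ioo (fun v hv => (hasDerivAt_div_one_sub hv.2.ne).hasDerivWithinAt)
    injOn_div_one_sub_Ioo]
  simp only [abs_inv, abs_sq]

lemma integral_Ioi_eq_integral_Ioo_div_one_sub (g : ℝ → E) :
    ∫ t in Ioi 0, g t = ∫ v in Ioo 0 1, ((1 - v) ^ 2)⁻¹ • g (v / (1 - v)) := by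
  rw [← image_div_one_sub_Ioo, integral_image_eq_integral_abs_deriv_smul
    measurableSet_Ioo (fun v hv => (hasDerivAt_div_one_sub hv.2.ne).hasDerivWithinAt)
    injOn_div_one_sub_Ioo]
  simp only [abs_inv, abs_sq]

end DivOneSub

lemma cpow_smul_one_add_cpow_neg_div_one_sub (w b : ℂ) {v : ℝ} (hv : v ∈ Ioo 0 1) :
    ((1 - v) ^ 2)⁻¹ • ((((v / (1 - v) : ℝ)) : ℂ) ^ (w - 1) • (1 + ((v / (1 - v) : ℝ) : ℂ)) ^ (-b)) =
      (v : ℂ) ^ (w - 1) * (1 - (v : ℂ)) ^ (b - w - 1) := by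
  obtain ⟨hv0, hv1⟩ := hv
  set u : ℝ := 1 - v with hu_def
  have hu : 0 < u := sub_pos.mpr hv1
  have hu0 : (u : ℂ) ≠ 0 := ofReal_ne_zero.mpr hu.ne'
  have h_one_add : 1 + ((v / u : ℝ) : ℂ) = ((u⁻¹ : ℝ) : ℂ) := by
    have : 1 + v / u = u⁻¹ := by field_simp; ring
    exact_mod_cast congrArg ofReal this
  have h_sub : (1 : ℂ) - v = u := by rw [hu_def]; push_cast; ring
  have h_pow : (u : ℂ) ^ (b - w - 1) = (u : ℂ) ^ b / (u : ℂ) ^ (w - 1) / (u : ℂ) ^ 2 := by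
    rw [← cpow_ofNat, ← cpow_sub _ _ hu0, ← cpow_sub _ _ hu0]
    ring_nf
  rw [h_one_add, ofReal_inv, inv_cpow_ofReal_nonneg hu.le, cpow_neg, inv_inv, ofReal_div,
    div_cpow_ofReal_nonneg hv0.le hu.le, h_sub, h_pow, real_smul, smul_eq_mul]
  push_cast
  field_simp

lemma setIntegral_Ioo_eq_betaIntegral (u v : ℂ) :
    ∫ x in Ioo (0 : ℝ) 1, (x : ℂ) ^ (u - 1) * (1 - (x : ℂ)) ^ (v - 1) = betaIntegral u v := by
  rw [betaIntegral, intervalIntegral.integral_of_le zero_le_one, integral_Ioc_eq_integral_Ioo]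

lemma mellinConvergent_one_add_cpow_neg {w b : ℂ} (hw : 0 < w.re) (hwb : w.re < b.re) :
    MellinConvergent (fun t : ℝ => (1 + (t : ℂ)) ^ (-b)) w := by
  have hbw : 0 < (b - w).re := by simpa using hwb
  rw [MellinConvergent, integrableOn_Ioi_iff_integrableOn_Ioo_div_one_sub,
    integrableOn_congr_fun (fun v hv => cpow_smul_one_add_cpow_neg_div_one_sub w b hv)
      measurableSet_Ioo]
  exact (intervalIntegrable_iff_integrableOn_Ioo_of_le zero_le_one).mp
    (betaIntegral_convergent hw hbw)

lemma mellin_one_add_cpow_neg {w b : ℂ} (hw : 0 < w.re) (hwb : w.re < b.re) :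
    mellin (fun t : ℝ => (1 + (t : ℂ)) ^ (-b)) w = Gamma w * Gamma (b - w) / Gamma b := by
  have hbw : 0 < (b - w).re := by simpa using hwb
  rw [mellin, integral_Ioi_eq_integral_Ioo_div_one_sub,
    setIntegral_congr_fun measurableSet_Ioo
      (fun v hv => cpow_smul_one_add_cpow_neg_div_one_sub w b hv),
    setIntegral_Ioo_eq_betaIntegral, betaIntegral_eq_Gamma_mul_div _ _ hw hbw, add_sub_cancel]

lemma mellin_ofReal_add_cpow_neg {x : ℝ} (hx : 0 < x) (w b : ℂ) :
    mellin (fun t : ℝ => ((x : ℂ) + t) ^ (-b)) w =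
      (x : ℂ) ^ (w - b) * mellin (fun t : ℝ => (1 + (t : ℂ)) ^ (-b)) w := by
  have hx0 : (x : ℂ) ≠ 0 := ofReal_ne_zero.mpr hx.ne'
  have h_factor : ∀ t ∈ Ioi (0 : ℝ), (t : ℂ) ^ (w - 1) • ((x : ℂ) + t) ^ (-b) =
      (t : ℂ) ^ (w - 1) • ((x : ℂ) ^ (-b) • (1 + ((x⁻¹ * t : ℝ) : ℂ)) ^ (-b)) := by
    intro t ht
    have ht : 0 < t := ht
    rw [show (x : ℂ) + t = (x : ℂ) * ((1 + x⁻¹ * t : ℝ) : ℂ) by push_cast; field_simp,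
      mul_cpow_ofReal_nonneg hx.le (by positivity)]
    push_cast
    rfl
  calc mellin (fun t : ℝ => ((x : ℂ) + t) ^ (-b)) w
      = mellin (fun t => (x : ℂ) ^ (-b) • (fun u : ℝ => (1 + (u : ℂ)) ^ (-b)) (x⁻¹ * t)) w :=
        setIntegral_congr_fun measurableSet_Ioi h_factor
    _ = (x : ℂ) ^ (-b) • ((x⁻¹ : ℝ) : ℂ) ^ (-w) • mellin (fun t => (1 + (t : ℂ)) ^ (-b)) w := by
        rw [mellin_const_smul,
          mellin_comp_mul_left (fun u : ℝ => (1 + (u : ℂ)) ^ (-b)) _ (inv_pos.mpr hx)]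
    _ = (x : ℂ) ^ (w - b) * mellin (fun t : ℝ => (1 + (t : ℂ)) ^ (-b)) w := by
        rw [ofReal_inv, inv_cpow_ofReal_nonneg hx.le, ← cpow_neg, neg_neg, smul_eq_mul,
          smul_eq_mul, ← mul_assoc, ← cpow_add _ _ hx0, neg_add_eq_sub]

lemma continuousOn_cpow_smul_add_cpow {a : ℂ} (ha : a ∈ slitPlane) (w b : ℂ) :
    ContinuousOn (fun t : ℝ => (t : ℂ) ^ (w - 1) • (a + t) ^ b) (Ioi 0) := by
  intro t ht
  refine ContinuousAt.continuousWithinAt <|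
    (continuousAt_ofReal_cpow_const t (w - 1) (Or.inr (ne_of_gt ht))).smul ?_
  exact (continuousAt_const.add continuous_ofReal.continuousAt).cpow continuousAt_const
    (add_ofReal_mem_slitPlane ha (le_of_lt ht))

lemma norm_add_ofReal_cpow_neg_le {a : ℂ} {b c t : ℝ} (hb : 0 ≤ b) (hc : 0 < c) (ht : 0 ≤ t)
    (h : c * (1 + t) ≤ ‖a + t‖) :
    ‖(a + t) ^ (-(b : ℂ))‖ ≤ c ^ (-b) * ‖(1 + (t : ℂ)) ^ (-(b : ℂ))‖ := by
  have h_one_add : ‖1 + (t : ℂ)‖ = 1 + t := by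
    rw [← ofReal_one, ← ofReal_add, norm_real, Real.norm_of_nonneg (by linarith)]
  rw [← ofReal_neg, norm_cpow_real, norm_cpow_real, h_one_add,
    ← Real.mul_rpow hc.le (by linarith)]
  exact Real.rpow_le_rpow_of_nonpos (by positivity) h (neg_nonpos.mpr hb)

lemma mellinConvergent_add_cpow_neg {a : ℂ} (ha : a ∈ slitPlane) {w : ℂ} {b : ℝ}
    (hw : 0 < w.re) (hwb : w.re < b) :
    MellinConvergent (fun t : ℝ => (a + t) ^ (-(b : ℂ))) w := by
  obtain ⟨c, hc, hbound⟩ := exists_mul_one_add_le_norm_add_ofReal ha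
  have h_one : MellinConvergent (fun t : ℝ => c ^ (-b) • (1 + (t : ℂ)) ^ (-(b : ℂ))) w :=
    (mellinConvergent_one_add_cpow_neg hw (by simpa using hwb)).const_smul _
  refine Integrable.mono h_one
    ((continuousOn_cpow_smul_add_cpow ha w _).aestronglyMeasurable measurableSet_Ioi) ?_
  filter_upwards [ae_restrict_mem measurableSet_Ioi] with t ht
  rw [norm_smul, norm_smul, norm_smul, Real.norm_of_nonneg (by positivity)]
  gcongr
  exact norm_add_ofReal_cpow_neg_le (by linarith) hc (le_of_lt ht) (hbound t (le_of_lt ht))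

lemma differentiableOn_mellin_add_cpow_neg {w : ℂ} {b : ℝ} (hw : 0 < w.re) (hwb : w.re < b) :
    DifferentiableOn ℂ (fun a : ℂ => mellin (fun t : ℝ => (a + t) ^ (-(b : ℂ))) w) slitPlane := by
  intro a₀ ha₀
  have hb : 0 ≤ b := by linarith
  obtain ⟨c, hc, hbound⟩ := exists_eventually_mul_one_add_le_norm_add_ofReal ha₀
  have hU : slitPlane ∩ {a | ∀ t : ℝ, 0 ≤ t → c * (1 + t) ≤ ‖a + t‖} ∈ 𝓝 a₀ :=
    inter_mem (isOpen_slitPlane.mem_nhds ha₀) hbound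
  have h_deriv := hasDerivAt_integral_of_dominated_loc_of_deriv_le
    (μ := volume.restrict (Ioi (0 : ℝ))) hU
    (F := fun (a : ℂ) (t : ℝ) => (t : ℂ) ^ (w - 1) • (a + t) ^ (-(b : ℂ)))
    (F' := fun (a : ℂ) (t : ℝ) =>
      -(b : ℂ) • ((t : ℂ) ^ (w - 1) • (a + t) ^ (-((b + 1 : ℝ) : ℂ))))
    (bound := fun t => b * c ^ (-(b + 1)) *
      ‖(t : ℂ) ^ (w - 1) • (1 + (t : ℂ)) ^ (-((b + 1 : ℝ) : ℂ))‖)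
    ?meas ?int ?meas' ?bound ?bound_int ?diff
  case meas =>
    filter_upwards [isOpen_slitPlane.mem_nhds ha₀] with a ha
    exact (continuousOn_cpow_smul_add_cpow ha w _).aestronglyMeasurable measurableSet_Ioi
  case int => exact mellinConvergent_add_cpow_neg ha₀ hw hwb
  case meas' =>
    exact ((continuousOn_cpow_smul_add_cpow ha₀ w _).aestronglyMeasurable
      measurableSet_Ioi).const_smul (-(b : ℂ))
  case bound =>
    filter_upwards [ae_restrict_mem measurableSet_Ioi] with t ht a ha
    have h_le := norm_add_ofReal_cpow_neg_le (b := b + 1) (by linarith) hc (le_of_lt ht)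
      (ha.2 t (le_of_lt ht))
    rw [norm_smul, norm_smul, norm_neg, norm_real, Real.norm_of_nonneg hb, norm_smul]
    calc _ ≤ b * (‖(t : ℂ) ^ (w - 1)‖ *
          (c ^ (-(b + 1)) * ‖(1 + (t : ℂ)) ^ (-((b + 1 : ℝ) : ℂ))‖)) := by gcongr
      _ = _ := by ring
  case bound_int =>
    have hwb' : w.re < ((b + 1 : ℝ) : ℂ).re := by rw [ofReal_re]; linarith
    exact (mellinConvergent_one_add_cpow_neg hw hwb').norm.const_mul _
  case diff =>
    filter_upwards [ae_restrict_mem measurableSet_Ioi] with t ht a ha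
    have h_pow := ((hasDerivAt_id' a).add_const (t : ℂ)).cpow_const (c := -(b : ℂ))
      (add_ofReal_mem_slitPlane ha.1 (le_of_lt ht))
    refine (h_pow.const_mul ((t : ℂ) ^ (w - 1))).congr_deriv ?_
    simp only [smul_eq_mul]
    push_cast
    rw [neg_add']
    ring
  exact h_deriv.2.differentiableAt.differentiableWithinAt

lemma mellin_add_cpow_neg {a : ℂ} (ha : a ∈ slitPlane) {w : ℂ} {b : ℝ}
    (hw : 0 < w.re) (hwb : w.re < b) :
    mellin (fun t : ℝ => (a + t) ^ (-(b : ℂ))) w =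
      a ^ (w - b) * (Gamma w * Gamma (b - w) / Gamma b) := by
  rw [← mellin_one_add_cpow_neg hw (by simpa using hwb)]
  have h_pow : DifferentiableOn ℂ (fun a : ℂ => a ^ (w - b)) slitPlane := fun z hz =>
    (differentiableAt_id.cpow (differentiableAt_const _) hz).differentiableWithinAt
  refine AnalyticOnNhd.eqOn_of_preconnected_of_frequently_eq
    ((differentiableOn_mellin_add_cpow_neg hw hwb).analyticOnNhd isOpen_slitPlane)
    ((h_pow.mul_const _).analyticOnNhd isOpen_slitPlane)
    (starConvex_one_slitPlane.isPathConnected one_mem_slitPlane).isConnected.isPreconnected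
    one_mem_slitPlane ?_ ha
  have h_real : ∀ᶠ x : ℝ in 𝓝[≠] 1,
      mellin (fun t : ℝ => ((x : ℂ) + t) ^ (-(b : ℂ))) w =
        (x : ℂ) ^ (w - b) * mellin (fun t : ℝ => (1 + (t : ℂ)) ^ (-(b : ℂ))) w :=
    eventually_nhdsWithin_of_eventually_nhds <|
      (lt_mem_nhds one_pos).mono fun x hx => mellin_ofReal_add_cpow_neg hx w b
  have h_ofReal : Tendsto ((↑) : ℝ → ℂ) (𝓝[≠] 1) (𝓝[≠] 1) := by
    simpa using continuous_ofReal.continuousWithinAt.tendsto_nhdsWithin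
      (x := (1 : ℝ)) (t := {1}ᶜ) fun _ _ ↦ by simp_all
  exact h_ofReal.frequently h_real.frequently

theorem stmt_8_general (α β : ℝ)
    (a : ℂ) (ha : ∀ r : ℝ, r ≤ 0 → a ≠ (r : ℂ))
    (s : ℂ) (hs1 : -α < s.re) (hs2 : s.re < β - α) :
    IntegrableOn (fun t : ℝ => (t : ℂ) ^ (s + (α : ℂ) - 1) * (a + (t : ℂ)) ^ (-(β : ℂ)))
      (Set.Ioi 0) ∧
    ∫ t in Set.Ioi (0 : ℝ), (t : ℂ) ^ (s + (α : ℂ) - 1) * (a + (t : ℂ)) ^ (-(β : ℂ)) =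
      a ^ (s + (α : ℂ) - (β : ℂ)) / Complex.Gamma (β : ℂ) *
        Complex.Gamma (s + (α : ℂ)) * Complex.Gamma ((β : ℂ) - (α : ℂ) - s) := by
  have ha' : a ∈ slitPlane := mem_slitPlane_iff_forall_ne_ofReal.mpr ha
  have hw : 0 < (s + α).re := by simp only [add_re, ofReal_re]; linarith
  have hwb : (s + α).re < β := by simp only [add_re, ofReal_re]; linarith
  refine ⟨mellinConvergent_add_cpow_neg ha' hw hwb, ?_⟩
  have h_mellin := mellin_add_cpow_neg ha' hw hwb
  simp only [mellin, smul_eq_mul] at h_mellin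
  rw [h_mellin, show (β : ℂ) - (s + α) = β - α - s by ring]
  ring

theorem stmt_8 (α β : ℝ) (hα : 0 ≤ α) (hβ : α < β)
    (a : ℂ) (ha : ∀ r : ℝ, r ≤ 0 → a ≠ (r : ℂ))
    (s : ℂ) (hs1 : -α < s.re) (hs2 : s.re < β - α) :
    IntegrableOn (fun t : ℝ => (t : ℂ) ^ (s + (α : ℂ) - 1) * (a + (t : ℂ)) ^ (-(β : ℂ)))
      (Set.Ioi 0) ∧
    ∫ t in Set.Ioi (0 : ℝ), (t : ℂ) ^ (s + (α : ℂ) - 1) * (a + (t : ℂ)) ^ (-(β : ℂ)) =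
      a ^ (s + (α : ℂ) - (β : ℂ)) / Complex.Gamma (β : ℂ) *
        Complex.Gamma (s + (α : ℂ)) * Complex.Gamma ((β : ℂ) - (α : ℂ) - s) :=
  stmt_8_general α β a ha s hs1 hs2
end

section
/- For every τ ∈ (0,1) there exist constants c_τ, C_τ > 0 such that for all real σ: c_τ · (1 + σ²)^{-1/2} · h(σ)^{1/2} ≤ |Γ(τ + iσ)| ≤ C_τ · h(σ)^{1/2}, where h(σ) = πσ / sinh(πσ) for σ ≠ 0 and h(0) = 1. -/
/-- `h(σ) = πσ / sinh(πσ)` for `σ ≠ 0`, and `h(0) = 1`. -/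
noncomputable def hfun (σ : ℝ) : ℝ :=
  if σ = 0 then 1 else Real.pi * σ / Real.sinh (Real.pi * σ)

/-!
The upper bound comes from the Beta integral: for `s = τ + iσ`,
`Γ(s) Γ(1 - τ) = Γ(1 + iσ) B(s, 1 - τ)`, where `|B(s, 1 - τ)| ≤ B(τ, 1 - τ)` by bounding the
integrand by its absolute value, and `|Γ(1 + iσ)|² = h(σ)` by the reflection formula.
The lower bound comes from the reflection formula `|Γ(s)| |Γ(1 - s)| |sin(πs)| = π`: the upper
bound applied to `Γ(1 - s)`, together with `|sin(πs)| ≤ cosh(πσ)` and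
`h(σ) cosh(πσ) = πσ coth(πσ) ≤ 1 + π|σ|`, bounds `|Γ(s)|` from below.
-/

open Real

lemma Real.div_sinh_pos {x : ℝ} (hx : x ≠ 0) : 0 < x / sinh x := by
  rcases hx.lt_or_gt with h | h
  · exact div_pos_of_neg_of_neg h (sinh_neg_iff.2 h)
  · exact div_pos h (sinh_pos_iff.2 h)

lemma Real.mul_cosh_le {x : ℝ} (hx : 0 ≤ x) : x * cosh x ≤ (1 + x) * sinh x := by
  have h_exp : cosh x - sinh x = exp (-x) := cosh_sub_sinh x
  have h_exp_le : exp (-x) ≤ 1 := exp_le_one_iff.2 (neg_nonpos.2 hx)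
  have h_sinh : x ≤ sinh x := self_le_sinh_iff.2 hx
  nlinarith

lemma Real.intervalIntegrable_rpow_mul_one_sub_rpow {a b : ℝ} (ha : 0 < a) (hb : 0 < b) :
    IntervalIntegrable (fun x : ℝ => x ^ (a - 1) * (1 - x) ^ (b - 1)) MeasureTheory.volume 0 1 := by
  refine (Complex.betaIntegral_convergent (u := a) (v := b) (by simpa) (by simpa)).norm.congr
    fun x hx => ?_
  rw [Set.uIoc_of_le zero_le_one] at hx
  simp only [norm_mul, ← Complex.ofReal_one, ← Complex.ofReal_sub, Complex.norm_cpow_real,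
    Complex.norm_real, norm_eq_abs, abs_of_nonneg hx.1.le, abs_of_nonneg (sub_nonneg.2 hx.2)]

namespace Complex

lemma norm_ofReal_cpow_le {x : ℝ} (hx : 0 ≤ x) (w : ℂ) : ‖(x : ℂ) ^ w‖ ≤ x ^ w.re := by
  simpa [arg_ofReal_of_nonneg hx, abs_of_nonneg hx] using norm_cpow_le (x : ℂ) w

lemma norm_sin_le_cosh_im (z : ℂ) : ‖sin z‖ ≤ Real.cosh z.im := by
  rw [sin, Real.cosh_eq, norm_div, norm_mul, norm_I, mul_one, RCLike.norm_ofNat]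
  gcongr
  refine (norm_sub_le _ _).trans_eq ?_
  simp only [norm_exp, neg_mul, neg_re, mul_re, I_re, I_im, mul_zero, mul_one, zero_sub, neg_neg]

lemma betaIntegral_ofReal (a b : ℝ) :
    betaIntegral a b = ((∫ x in (0 : ℝ)..1, x ^ (a - 1) * (1 - x) ^ (b - 1) : ℝ) : ℂ) := by
  rw [betaIntegral, ← intervalIntegral.integral_ofReal]
  refine intervalIntegral.integral_congr fun x hx => ?_
  rw [Set.uIcc_of_le zero_le_one] at hx
  simp only [ofReal_mul, ofReal_cpow hx.1, ofReal_cpow (sub_nonneg.2 hx.2)]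
  push_cast
  ring_nf

end Complex

lemma Real.integral_rpow_mul_one_sub_rpow {a b : ℝ} (ha : 0 < a) (hb : 0 < b) :
    ∫ x in (0 : ℝ)..1, x ^ (a - 1) * (1 - x) ^ (b - 1) = Gamma a * Gamma b / Gamma (a + b) := by
  have h := Complex.betaIntegral_eq_Gamma_mul_div a b (by simpa) (by simpa)
  rw [Complex.betaIntegral_ofReal, ← Complex.ofReal_add] at h
  simp only [Complex.Gamma_ofReal] at h
  exact_mod_cast h

namespace Complex

lemma norm_betaIntegral_le {s t : ℂ} (hs : 0 < s.re) (ht : 0 < t.re) :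
    ‖betaIntegral s t‖ ≤ Real.Gamma s.re * Real.Gamma t.re / Real.Gamma (s.re + t.re) := by
  rw [← Real.integral_rpow_mul_one_sub_rpow hs ht]
  refine intervalIntegral.norm_integral_le_of_norm_le zero_le_one
    (Filter.Eventually.of_forall fun x hx => ?_)
    (Real.intervalIntegrable_rpow_mul_one_sub_rpow hs ht)
  have h1x : (1 : ℂ) - x = ((1 - x : ℝ) : ℂ) := by push_cast; ring
  rw [norm_mul, h1x]
  exact mul_le_mul (by simpa using norm_ofReal_cpow_le hx.1.le (s - 1))
    (by simpa using norm_ofReal_cpow_le (sub_nonneg.2 hx.2) (t - 1)) (norm_nonneg _)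
    (rpow_nonneg hx.1.le _)

lemma norm_Gamma_mul_Gamma_le {s t : ℂ} (hs : 0 < s.re) (ht : 0 < t.re) :
    ‖Gamma s * Gamma t‖ ≤
      ‖Gamma (s + t)‖ * (Real.Gamma s.re * Real.Gamma t.re / Real.Gamma (s.re + t.re)) := by
  rw [Gamma_mul_Gamma_eq_betaIntegral hs ht, norm_mul]
  gcongr
  exact norm_betaIntegral_le hs ht

lemma Gamma_one_add_mul_Gamma_one_sub {z : ℂ} (hz : z ≠ 0) :
    Gamma (1 + z) * Gamma (1 - z) = π * z / sin (π * z) := by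
  rw [add_comm, Gamma_add_one z hz, mul_assoc, Gamma_mul_Gamma_one_sub, mul_div_assoc', mul_comm]

lemma norm_Gamma_mul_norm_Gamma_one_sub_mul_norm_sin {z : ℂ} (hz0 : 0 < z.re) (hz1 : z.re < 1) :
    ‖Gamma z‖ * ‖Gamma (1 - z)‖ * ‖sin (π * z)‖ = π := by
  have h_refl := Gamma_mul_Gamma_one_sub z
  have h_ne : Gamma z * Gamma (1 - z) ≠ 0 :=
    mul_ne_zero (Gamma_ne_zero_of_re_pos hz0) (Gamma_ne_zero_of_re_pos (by simpa))
  have h_sin : sin (π * z) ≠ 0 := fun h0 => h_ne (by rw [h_refl, h0, div_zero])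
  rw [← norm_mul, h_refl, norm_div, norm_real, norm_eq_abs, abs_of_pos pi_pos,
    div_mul_cancel₀ _ (norm_ne_zero_iff.2 h_sin)]

end Complex

open Complex (Gamma I)

lemma hfun_pos (σ : ℝ) : 0 < hfun σ := by
  unfold hfun
  split_ifs with h
  · exact one_pos
  · exact div_sinh_pos (mul_ne_zero pi_ne_zero h)

lemma hfun_neg (σ : ℝ) : hfun (-σ) = hfun σ := by
  unfold hfun
  simp only [neg_eq_zero, mul_neg, sinh_neg, neg_div_neg_eq]

lemma hfun_mul_cosh_le (σ : ℝ) : hfun σ * cosh (π * σ) ≤ 1 + π * |σ| := by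
  wlog hσ : 0 ≤ σ generalizing σ
  · simpa [hfun_neg, cosh_neg] using this (-σ) (by linarith)
  rcases hσ.eq_or_lt with rfl | hσ
  · simp [hfun]
  have hx : 0 < π * σ := mul_pos pi_pos hσ
  rw [hfun, if_neg hσ.ne', div_mul_eq_mul_div, div_le_iff₀ (sinh_pos_iff.2 hx),
    abs_of_pos hσ]
  exact mul_cosh_le hx.le

lemma norm_Gamma_one_add_I_mul_sq (σ : ℝ) : ‖Gamma (1 + I * σ)‖ ^ 2 = hfun σ := by
  rcases eq_or_ne σ 0 with rfl | hσ
  · simp [hfun]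
  have h_conj : (starRingEnd ℂ) (1 + I * σ) = 1 - I * σ := by simp [Complex.ext_iff]
  have h_sin : Complex.sin (π * (I * σ)) = Real.sinh (π * σ) * I := by
    rw [show (π : ℂ) * (I * σ) = ((π * σ : ℝ) : ℂ) * I by push_cast; ring, Complex.sin_mul_I,
      Complex.ofReal_sinh]
  have h : ((‖Gamma (1 + I * σ)‖ ^ 2 : ℝ) : ℂ) = ((π * σ / Real.sinh (π * σ) : ℝ) : ℂ) := by
    rw [Complex.ofReal_pow, ← Complex.mul_conj', ← Complex.Gamma_conj, h_conj,
      Complex.Gamma_one_add_mul_Gamma_one_sub (by simpa using hσ), h_sin]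
    push_cast
    rw [mul_comm I, ← mul_assoc, mul_div_mul_right _ _ Complex.I_ne_zero]
  rw [hfun, if_neg hσ]
  exact_mod_cast h

lemma norm_Gamma_one_add_I_mul (σ : ℝ) : ‖Gamma (1 + I * σ)‖ = √(hfun σ) := by
  rw [← norm_Gamma_one_add_I_mul_sq, sqrt_sq (norm_nonneg _)]

lemma norm_Gamma_le_mul_sqrt_hfun {τ : ℝ} (hτ0 : 0 < τ) (hτ1 : τ < 1) (σ : ℝ) :
    ‖Gamma (τ + I * σ)‖ ≤ Real.Gamma τ * √(hfun σ) := by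
  have hΓ : 0 < Real.Gamma (1 - τ) := Gamma_pos_of_pos (sub_pos.2 hτ1)
  have h := Complex.norm_Gamma_mul_Gamma_le (s := τ + I * σ) (t := ((1 - τ : ℝ) : ℂ))
    (by simpa using hτ0) (by simpa using hτ1)
  have h_sum : (τ : ℂ) + I * σ + ((1 - τ : ℝ) : ℂ) = 1 + I * σ := by push_cast; ring
  simp only [h_sum, norm_mul, norm_Gamma_one_add_I_mul, Complex.Gamma_ofReal, Complex.norm_real,
    norm_eq_abs, abs_of_pos hΓ, Complex.add_re, Complex.ofReal_re, Complex.mul_re, Complex.I_re,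
    Complex.I_im, Complex.ofReal_im, zero_mul, mul_zero, sub_zero, add_zero, add_sub_cancel,
    Real.Gamma_one, div_one] at h
  exact le_of_mul_le_mul_right (by linarith) hΓ

lemma mul_sqrt_hfun_le_norm_Gamma {τ : ℝ} (hτ0 : 0 < τ) (hτ1 : τ < 1) (σ : ℝ) :
    π / ((1 + π) * Real.Gamma (1 - τ)) * √(1 + σ ^ 2)⁻¹ * √(hfun σ) ≤ ‖Gamma (τ + I * σ)‖ := by
  set u : ℂ := τ + I * σ
  have hΓ : 0 < Real.Gamma (1 - τ) := Gamma_pos_of_pos (sub_pos.2 hτ1)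
  have h_refl := Complex.norm_Gamma_mul_norm_Gamma_one_sub_mul_norm_sin (z := u)
    (by simpa [u] using hτ0) (by simpa [u] using hτ1)
  have h_reflected : ‖Gamma (1 - u)‖ ≤ Real.Gamma (1 - τ) * √(hfun σ) := by
    have h := norm_Gamma_le_mul_sqrt_hfun (τ := 1 - τ) (by linarith) (by linarith) (-σ)
    rw [hfun_neg] at h
    convert h using 3
    push_cast
    ring
  have h_sin : ‖Complex.sin (π * u)‖ ≤ cosh (π * σ) := by
    simpa [u] using Complex.norm_sin_le_cosh_im (π * u)
  have h_cosh : hfun σ * cosh (π * σ) ≤ (1 + π) * √(1 + σ ^ 2) := by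
    have h1 : 1 ≤ √(1 + σ ^ 2) := one_le_sqrt.2 (by nlinarith)
    have h2 : |σ| ≤ √(1 + σ ^ 2) := abs_le_sqrt (by linarith)
    nlinarith [hfun_mul_cosh_le σ, pi_pos]
  have key : π * √(hfun σ) ≤ ‖Gamma u‖ * (Real.Gamma (1 - τ) * ((1 + π) * √(1 + σ ^ 2))) :=
    calc π * √(hfun σ) = ‖Gamma u‖ * ‖Gamma (1 - u)‖ * ‖Complex.sin (π * u)‖ * √(hfun σ) := by
          rw [h_refl]
      _ ≤ ‖Gamma u‖ * (Real.Gamma (1 - τ) * √(hfun σ)) * cosh (π * σ) * √(hfun σ) := by gcongr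
      _ = ‖Gamma u‖ * (Real.Gamma (1 - τ) * (hfun σ * cosh (π * σ))) := by
          linear_combination
            (‖Gamma u‖ * Real.Gamma (1 - τ) * cosh (π * σ)) * mul_self_sqrt (hfun_pos σ).le
      _ ≤ ‖Gamma u‖ * (Real.Gamma (1 - τ) * ((1 + π) * √(1 + σ ^ 2))) := by gcongr
  rw [sqrt_inv, div_mul_eq_mul_div, div_mul_eq_mul_div, div_le_iff₀ (by positivity),
    mul_right_comm, ← div_eq_mul_inv, div_le_iff₀ (sqrt_pos.2 (by positivity))]
  linarith

theorem stmt_12 (τ : ℝ) (hτ0 : 0 < τ) (hτ1 : τ < 1) :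
    ∃ c C : ℝ, 0 < c ∧ 0 < C ∧ ∀ σ : ℝ,
      c * Real.sqrt (1 + σ ^ 2)⁻¹ * Real.sqrt (hfun σ) ≤
          ‖Complex.Gamma ((τ : ℂ) + Complex.I * (σ : ℂ))‖ ∧
      ‖Complex.Gamma ((τ : ℂ) + Complex.I * (σ : ℂ))‖ ≤
          C * Real.sqrt (hfun σ) := by
  have hΓ : 0 < Real.Gamma (1 - τ) := Real.Gamma_pos_of_pos (sub_pos.2 hτ1)
  exact ⟨π / ((1 + π) * Real.Gamma (1 - τ)), Real.Gamma τ, by positivity,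
    Real.Gamma_pos_of_pos hτ0, fun σ =>
      ⟨mul_sqrt_hfun_le_norm_Gamma hτ0 hτ1 σ, norm_Gamma_le_mul_sqrt_hfun hτ0 hτ1 σ⟩⟩
end

section
/- Let 0 < ρ < π, ε > 0 and C > 0, and let ψ be a holomorphic function on the open sector Σ_ρ = {z ∈ ℂ ∖ {0} : |arg z| < ρ} satisfying |ψ(z)| ≤ C · min(|z|^ε, |z|^{−ε}) for all z ∈ Σ_ρ. Then for every σ ∈ ℝ the integral ∫₀^∞ t^{iσ−1} ψ(t) dt converges absolutely and |∫₀^∞ t^{iσ−1} ψ(t) dt| ≤ (2C/ε) · e^{−ρ|σ|}. -/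
/-!
Substituting `t = exp u` turns the integral into `∫ g u du` with
`g w = exp (iσw) ψ (exp w)`, which is holomorphic on the strip `|Im w| < ρ` and satisfies
`‖g (x + iy)‖ ≤ C exp (-σy) exp (-ε|x|)` there. Cauchy's theorem moves the line of integration
to `Im w = θ` for every `|θ| < ρ`, where the integral is at most `(2C/ε) exp (-σθ)`; letting
`θ → ρ · sign σ` gives the bound.
-/

open MeasureTheory Set Filter Topology Real Complex
open scoped Interval

lemma Complex.arg_exp_of_abs_im_lt {w : ℂ} (h : |w.im| < π) : arg (cexp w) = w.im := by
  rw [arg_exp, toIocMod_eq_self]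
  constructor <;> linarith [abs_lt.mp h]

lemma Complex.mapsTo_exp_strip_sector {ρ : ℝ} (hρ : ρ ≤ π) :
    MapsTo cexp {w : ℂ | |w.im| < ρ} {z : ℂ | z ≠ 0 ∧ |arg z| < ρ} := fun w hw =>
  ⟨exp_ne_zero w, by rwa [arg_exp_of_abs_im_lt (lt_of_lt_of_le hw hρ)]⟩

lemma Real.min_exp_rpow_exp_rpow_neg (x : ℝ) {ε : ℝ} (hε : 0 ≤ ε) :
    min (rexp x ^ ε) (rexp x ^ (-ε)) = rexp (-(ε * |x|)) := by
  rw [← Real.exp_mul, ← Real.exp_mul, ← Real.exp_monotone.map_min]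
  congr 1
  rcases le_total 0 x with hx | hx
  · rw [abs_of_nonneg hx, min_eq_right (by nlinarith)]; ring
  · rw [abs_of_nonpos hx, min_eq_left (by nlinarith)]; ring

lemma Complex.ofReal_exp_smul_cpow_sub_one (u : ℝ) (s : ℂ) :
    rexp u • ((rexp u : ℂ) ^ (s - 1)) = cexp (s * u) := by
  rw [cpow_def_of_ne_zero (by exact_mod_cast (Real.exp_pos u).ne'),
    ← ofReal_log (Real.exp_pos u).le, Real.log_exp, real_smul, ofReal_exp, ← Complex.exp_add]
  ring_nf

lemma integral_exp_neg_mul_abs {ε : ℝ} (hε : 0 < ε) : ∫ x : ℝ, rexp (-(ε * |x|)) = 2 / ε := by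
  simp_rw [← neg_mul]
  rw [integral_comp_abs (f := fun x => rexp (-ε * x)), integral_exp_mul_Ioi (by linarith)]
  field_simp
  simp

lemma integrable_exp_neg_mul_abs {ε : ℝ} (hε : 0 < ε) :
    Integrable fun x : ℝ => rexp (-(ε * |x|)) :=
  .of_integral_ne_zero (by rw [integral_exp_neg_mul_abs hε]; positivity)

lemma tendsto_exp_neg_mul_abs_cocompact {ε : ℝ} (hε : 0 < ε) :
    Tendsto (fun x : ℝ => rexp (-(ε * |x|))) (cocompact ℝ) (𝓝 0) :=
  Real.tendsto_exp_atBot.comp <| tendsto_neg_atTop_atBot.comp <|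
    (tendsto_norm_cocompact_atTop (E := ℝ)).const_mul_atTop hε

section ExponentialDecay

variable {E : Type*} [NormedAddCommGroup E] {K ε : ℝ} {h : ℝ → E}

lemma integrable_of_norm_le_mul_exp_neg_mul_abs (hε : 0 < ε) (hm : AEStronglyMeasurable h)
    (hh : ∀ x, ‖h x‖ ≤ K * rexp (-(ε * |x|))) : Integrable h :=
  ((integrable_exp_neg_mul_abs hε).const_mul K).mono' hm (.of_forall hh)

lemma norm_integral_le_of_norm_le_mul_exp_neg_mul_abs [NormedSpace ℝ E] (hε : 0 < ε)
    (hh : ∀ x, ‖h x‖ ≤ K * rexp (-(ε * |x|))) : ‖∫ x, h x‖ ≤ 2 * K / ε :=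
  calc ‖∫ x, h x‖ ≤ ∫ x, K * rexp (-(ε * |x|)) :=
        norm_integral_le_of_norm_le ((integrable_exp_neg_mul_abs hε).const_mul K) (.of_forall hh)
    _ = 2 * K / ε := by rw [integral_const_mul, integral_exp_neg_mul_abs hε]; ring

end ExponentialDecay

section ContourShift

variable {E : Type*} [NormedAddCommGroup E] [NormedSpace ℂ E] {f : ℂ → E} {θ : ℝ}
  {b : ℝ → ℝ}

lemma tendsto_integral_vertical_segment_zero {l : Filter ℝ} (hb : Tendsto b l (𝓝 0))
    (hfb : ∀ x : ℝ, ∀ y ∈ [[0, θ]], ‖f (x + y * I)‖ ≤ b x) :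
    Tendsto (fun x : ℝ => ∫ y in (0 : ℝ)..θ, f (x + y * I)) l (𝓝 0) :=
  squeeze_zero_norm
    (fun x => intervalIntegral.norm_integral_le_of_norm_le_const fun y hy =>
      hfb x y (uIoc_subset_uIcc hy))
    (by simpa using hb.mul_const |θ - 0|)

theorem integral_eq_integral_add_mul_I_of_differentiableOn [CompleteSpace E]
    (hf : DifferentiableOn ℂ f (univ ×ℂ [[0, θ]]))
    (h0 : Integrable fun x : ℝ => f x) (hθ : Integrable fun x : ℝ => f (x + θ * I))
    (hb : Tendsto b (cocompact ℝ) (𝓝 0))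
    (hfb : ∀ x : ℝ, ∀ y ∈ [[0, θ]], ‖f (x + y * I)‖ ≤ b x) :
    ∫ x : ℝ, f x = ∫ x : ℝ, f (x + θ * I) := by
  set V := fun x : ℝ => ∫ y in (0 : ℝ)..θ, f (x + y * I)
  have hrect : ∀ R : ℝ,
      (∫ x in -R..R, f x) - (∫ x in -R..R, f (x + θ * I)) + I • V R - I • V (-R) = 0 := fun R => by
    simpa [V] using integral_boundary_rect_eq_zero_of_differentiableOn f (-R) (R + θ * I)
      (hf.mono fun w hw => ⟨trivial, by simpa using hw.2⟩)
  have hright := tendsto_integral_vertical_segment_zero (hb.mono_left atTop_le_cocompact) hfb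
  have hleft := (tendsto_integral_vertical_segment_zero (hb.mono_left atBot_le_cocompact)
    hfb).comp tendsto_neg_atTop_atBot
  have hlim := ((intervalIntegral_tendsto_integral h0 tendsto_neg_atTop_atBot tendsto_id).sub
    (intervalIntegral_tendsto_integral hθ tendsto_neg_atTop_atBot tendsto_id)).add
    ((hright.const_smul I).sub (hleft.const_smul I))
  rw [smul_zero, sub_zero, add_zero] at hlim
  refine sub_eq_zero.mp (tendsto_nhds_unique hlim (tendsto_const_nhds.congr fun R => ?_))
  rw [← hrect R]
  simp only [id, Function.comp_apply, V, ofReal_neg]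
  abel

end ContourShift

lemma le_mul_exp_neg_mul_abs_of_forall_mem_Ioo {a K ρ σ : ℝ} (hρ : 0 < ρ)
    (h : ∀ θ ∈ Ioo (-ρ) ρ, a ≤ K * rexp (-(σ * θ))) : a ≤ K * rexp (-ρ * |σ|) := by
  have hIcc : Icc (-ρ) ρ ⊆ {θ | a ≤ K * rexp (-(σ * θ))} := by
    rw [← closure_Ioo (by linarith : -ρ ≠ ρ)]
    exact closure_minimal h (isClosed_le continuous_const (by fun_prop))
  rcases abs_choice σ with hσ | hσ
  · simpa [hσ, mul_comm] using hIcc ⟨by linarith, le_rfl⟩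
  · simpa [hσ, mul_comm] using hIcc ⟨le_rfl, by linarith⟩

theorem integrable_and_norm_integral_le_of_differentiableOn_strip {E : Type*}
    [NormedAddCommGroup E] [NormedSpace ℂ E] [CompleteSpace E] {f : ℂ → E} {ρ ε C σ : ℝ}
    (hρ : 0 < ρ) (hε : 0 < ε) (hf : DifferentiableOn ℂ f {w | |w.im| < ρ})
    (hbd : ∀ w : ℂ, |w.im| < ρ → ‖f w‖ ≤ C * rexp (-(σ * w.im)) * rexp (-(ε * |w.re|))) :
    Integrable (fun x : ℝ => f x) ∧ ‖∫ x : ℝ, f x‖ ≤ 2 * C / ε * rexp (-ρ * |σ|) := by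
  have hC : 0 ≤ C := by simpa using (norm_nonneg _).trans (hbd 0 (by simpa))
  have hstrip : ∀ {x y : ℝ}, y ∈ Ioo (-ρ) ρ → |((x : ℂ) + y * I).im| < ρ := fun hy => by
    simpa [abs_lt] using hy
  have hline : ∀ θ ∈ Ioo (-ρ) ρ, ∀ x : ℝ,
      ‖f (x + θ * I)‖ ≤ C * rexp (-(σ * θ)) * rexp (-(ε * |x|)) := fun θ hθ x => by
    simpa using hbd _ (hstrip hθ)
  have hint : ∀ θ ∈ Ioo (-ρ) ρ, Integrable fun x : ℝ => f (x + θ * I) := fun θ hθ =>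
    integrable_of_norm_le_mul_exp_neg_mul_abs hε
      (hf.continuousOn.comp_continuous (by fun_prop) fun _ => hstrip hθ).aestronglyMeasurable
      (hline θ hθ)
  have hint₀ : Integrable fun x : ℝ => f x := by simpa using hint 0 ⟨by linarith, hρ⟩
  refine ⟨hint₀, le_mul_exp_neg_mul_abs_of_forall_mem_Ioo hρ fun θ hθ => ?_⟩
  have hsub : [[0, θ]] ⊆ Ioo (-ρ) ρ := ordConnected_Ioo.uIcc_subset ⟨by linarith, hρ⟩ hθ
  have hvert : ∀ x : ℝ, ∀ y ∈ [[0, θ]],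
      ‖f (x + y * I)‖ ≤ C * rexp (|σ| * ρ) * rexp (-(ε * |x|)) := fun x y hy => by
    have hσy : -(σ * y) ≤ |σ| * ρ := (neg_le_abs _).trans <| by
      rw [abs_mul]; exact mul_le_mul_of_nonneg_left (abs_lt.mpr (hsub hy)).le (abs_nonneg σ)
    exact (hline y (hsub hy) x).trans (by gcongr)
  have hdecay :
      Tendsto (fun x : ℝ => C * rexp (|σ| * ρ) * rexp (-(ε * |x|))) (cocompact ℝ) (𝓝 0) := by
    simpa using (tendsto_exp_neg_mul_abs_cocompact hε).const_mul (C * rexp (|σ| * ρ))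
  rw [integral_eq_integral_add_mul_I_of_differentiableOn
    (hf.mono fun w hw => abs_lt.mpr (hsub hw.2)) hint₀ (hint θ hθ) hdecay hvert]
  exact (norm_integral_le_of_norm_le_mul_exp_neg_mul_abs hε (hline θ hθ)).trans_eq (by ring)

section ExpSubstitution

variable {E : Type*} [NormedAddCommGroup E] [NormedSpace ℝ E] (g : ℝ → E)

lemma integrableOn_Ioi_zero_iff_integrable_exp_smul :
    IntegrableOn g (Ioi 0) ↔ Integrable fun u => rexp u • g (rexp u) := by
  simpa [Real.range_exp, abs_of_pos (Real.exp_pos _)] using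
    integrableOn_image_iff_integrableOn_abs_deriv_smul MeasurableSet.univ
      (fun x _ => (Real.hasDerivAt_exp x).hasDerivWithinAt) Real.exp_injective.injOn g

lemma integral_Ioi_zero_eq_integral_exp_smul :
    ∫ t in Ioi 0, g t = ∫ u, rexp u • g (rexp u) := by
  simpa [Real.range_exp, abs_of_pos (Real.exp_pos _)] using
    integral_image_eq_integral_abs_deriv_smul MeasurableSet.univ
      (fun x _ => (Real.hasDerivAt_exp x).hasDerivWithinAt) Real.exp_injective.injOn g

end ExpSubstitution

theorem stmt_13_general (ρ ε C : ℝ) (hρ0 : 0 < ρ) (hρπ : ρ < Real.pi) (hε : 0 < ε)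
    (ψ : ℂ → ℂ)
    (hψan : DifferentiableOn ℂ ψ {z : ℂ | z ≠ 0 ∧ |Complex.arg z| < ρ})
    (hψbd : ∀ z : ℂ, z ≠ 0 → |Complex.arg z| < ρ →
      ‖ψ z‖ ≤ C * min (‖z‖ ^ ε) (‖z‖ ^ (-ε)))
    (σ : ℝ) :
    IntegrableOn (fun t : ℝ => (t : ℂ) ^ (Complex.I * (σ : ℂ) - 1) * ψ (t : ℂ))
      (Set.Ioi 0) ∧
    ‖∫ t in Set.Ioi (0 : ℝ), (t : ℂ) ^ (Complex.I * (σ : ℂ) - 1) * ψ (t : ℂ)‖ ≤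
      2 * C / ε * Real.exp (-ρ * |σ|) := by
  set g : ℂ → ℂ := fun w => cexp (I * σ * w) * ψ (cexp w)
  have hmaps := mapsTo_exp_strip_sector hρπ.le
  have hg : ∀ u : ℝ, rexp u • ((rexp u : ℂ) ^ (I * σ - 1) * ψ (rexp u)) = g u := fun u => by
    rw [← smul_mul_assoc, ofReal_exp_smul_cpow_sub_one, ofReal_exp]
  have hg_diff : DifferentiableOn ℂ g {w | |w.im| < ρ} :=
    (by fun_prop : Differentiable ℂ fun w => cexp (I * σ * w)).differentiableOn.mul
      (hψan.comp differentiable_exp.differentiableOn hmaps)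
  have hg_bd : ∀ w : ℂ, |w.im| < ρ →
      ‖g w‖ ≤ C * rexp (-(σ * w.im)) * rexp (-(ε * |w.re|)) := fun w hw => by
    have hψw := hψbd _ (hmaps hw).1 (hmaps hw).2
    rw [norm_exp, Real.min_exp_rpow_exp_rpow_neg _ hε.le] at hψw
    calc ‖g w‖ = rexp (-(σ * w.im)) * ‖ψ (cexp w)‖ := by simp [g, norm_exp]
      _ ≤ rexp (-(σ * w.im)) * (C * rexp (-(ε * |w.re|))) := by gcongr
      _ = C * rexp (-(σ * w.im)) * rexp (-(ε * |w.re|)) := by ring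
  rw [integrableOn_Ioi_zero_iff_integrable_exp_smul, integral_Ioi_zero_eq_integral_exp_smul]
  simp_rw [hg]
  exact integrable_and_norm_integral_le_of_differentiableOn_strip hρ0 hε hg_diff hg_bd

theorem stmt_13 (ρ ε C : ℝ) (hρ0 : 0 < ρ) (hρπ : ρ < Real.pi) (hε : 0 < ε) (hC : 0 < C)
    (ψ : ℂ → ℂ)
    (hψan : DifferentiableOn ℂ ψ {z : ℂ | z ≠ 0 ∧ |Complex.arg z| < ρ})
    (hψbd : ∀ z : ℂ, z ≠ 0 → |Complex.arg z| < ρ →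
      ‖ψ z‖ ≤ C * min (‖z‖ ^ ε) (‖z‖ ^ (-ε)))
    (σ : ℝ) :
    IntegrableOn (fun t : ℝ => (t : ℂ) ^ (Complex.I * (σ : ℂ) - 1) * ψ (t : ℂ))
      (Set.Ioi 0) ∧
    ‖∫ t in Set.Ioi (0 : ℝ), (t : ℂ) ^ (Complex.I * (σ : ℂ) - 1) * ψ (t : ℂ)‖ ≤
      2 * C / ε * Real.exp (-ρ * |σ|) :=
  stmt_13_general ρ ε C hρ0 hρπ hε ψ hψan hψbd σ
end

section
/- Let X be a Banach space and let U : ℝ → L(X) satisfy U(0) = I, U(s+t) = U(s)U(t) for all s, t ∈ ℝ, and suppose τ ↦ U(τ)x is continuous from ℝ to X for every x ∈ X. Set M := sup{‖U(τ)‖_{L(X)} : |τ| ≤ 3/2}, which is finite. Let g ∈ L¹(ℝ; ℂ) with support contained in [−1, 1], and let K be the operator norm on L²(ℝ; X) of the convolution operator f ↦ g * f, (g*f)(τ) = ∫_ℝ g(τ−σ) f(σ) dσ. Then the operator f ↦ (τ ↦ ∫_ℝ g(τ−σ) U(τ−σ) f(σ) dσ) is bounded on L²(ℝ; X) with operator norm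 at most 3 M² K. -/
/-!
Cut ℝ into the unit intervals `[n, n + 1)`. For `τ ∈ [n, n + 1)` only `σ ∈ [n - 1, n + 2)`
contributes, and the group law splits `U (τ - σ) = U (τ - n - 1/2) ∘ U (n + 1/2 - σ)` with both
arguments in `[-3/2, 3/2]`. So on `[n, n + 1)` the operator is `U (τ - n - 1/2)` applied to the
scalar convolution of `g` with `fₙ = 𝟙_[n-1, n+2) · U (n + 1/2 - ·) f`, and its `L²` norm there is
at most `M K M ‖f‖_{L²[n-1, n+2)}`. Summing squares over `n` counts every unit interval three
times, which gives the bound `√3 M² K ≤ 3 M² K`. Banach–Steinhaus makes `(τ, x) ↦ U τ x` jointly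
continuous, which is what the measurability of the pieces rests on.
-/

open MeasureTheory Set
open scoped ENNReal

section StronglyContinuous

variable {α 𝕜 E F : Type*} [TopologicalSpace α] [NontriviallyNormedField 𝕜]
  [NormedAddCommGroup E] [NormedSpace 𝕜 E] [CompleteSpace E]
  [NormedAddCommGroup F] [NormedSpace 𝕜 F] {U : α → E →L[𝕜] F}

theorem IsCompact.bddAbove_image_opNorm (hU : ∀ x, Continuous fun a => U a x) {s : Set α}
    (hs : IsCompact s) : BddAbove ((fun a => ‖U a‖) '' s) := by
  obtain ⟨C, hC⟩ := banach_steinhaus (g := fun a : s => U a) fun x => by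
    obtain ⟨C, hC⟩ := (hs.image (hU x).norm).bddAbove
    exact ⟨C, fun a => hC (mem_image_of_mem _ a.2)⟩
  exact ⟨C, forall_mem_image.2 fun a ha => hC ⟨a, ha⟩⟩

theorem continuous_uncurry_of_continuous_apply [WeaklyLocallyCompactSpace α]
    (hU : ∀ x, Continuous fun a => U a x) : Continuous fun p : α × E => U p.1 p.2 := by
  refine continuous_iff_continuousAt.2 fun ⟨a₀, x₀⟩ => ?_
  obtain ⟨s, hs, hsa⟩ := exists_compact_mem_nhds a₀
  obtain ⟨C, hC⟩ := hs.bddAbove_image_opNorm hU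
  have hcont : ContinuousOn (fun p : α × E => U p.1 p.2) (s ×ˢ univ) :=
    continuousOn_prod_of_continuousOn_lipschitzOnWith' _ C.toNNReal
      (fun a ha => ((U a).lipschitz.weaken ?_).lipschitzOnWith) fun x _ => (hU x).continuousOn
  · exact hcont.continuousAt (prod_mem_nhds hsa Filter.univ_mem)
  · rw [← NNReal.coe_le_coe, coe_nnnorm]
    exact (hC (mem_image_of_mem _ ha)).trans (Real.le_coe_toNNReal C)

end StronglyContinuous

-- `U c` is invertible, so it commutes with the Bochner integral even when `φ` is not integrable.
theorem integral_apply_comm_of_map_add {β G X : Type*} [MeasurableSpace β] {μ : Measure β}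
    [AddGroup G] [NormedAddCommGroup X] [NormedSpace ℂ X] {U : G → X →L[ℂ] X} (hU0 : U 0 = 1)
    (hUadd : ∀ s t, U (s + t) = U s ∘L U t) (c : G) (φ : β → X) :
    ∫ b, U c (φ b) ∂μ = U c (∫ b, φ b ∂μ) := by
  have hinv : ∀ s t, s + t = 0 → Function.LeftInverse (U s) (U t) := fun s t hst x => by
    simp [← ContinuousLinearMap.comp_apply, ← hUadd, hst, hU0]
  exact (ContinuousLinearEquiv.equivOfInverse (U c) (U (-c)) (hinv _ _ (neg_add_cancel c))
    (hinv _ _ (add_neg_cancel c))).integral_comp_comm φ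

theorem sq_eLpNorm_two {β ε : Type*} [MeasurableSpace β] {μ : Measure β} [TopologicalSpace ε]
    [ContinuousENorm ε] (f : β → ε) : eLpNorm f 2 μ ^ 2 = ∫⁻ x, ‖f x‖ₑ ^ 2 ∂μ := by
  simpa using eLpNorm_nnreal_pow_eq_lintegral (f := f) (μ := μ) (p := 2) two_ne_zero

theorem lintegral_eq_tsum_Ico_intCast (G : ℝ → ℝ≥0∞) :
    ∫⁻ x, G x = ∑' n : ℤ, ∫⁻ x in Ico (n : ℝ) (n + 1), G x := by
  rw [← lintegral_iUnion (fun n => measurableSet_Ico) (pairwise_disjoint_Ico_intCast ℝ),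
    iUnion_Ico_intCast, Measure.restrict_univ]

theorem lintegral_Ico_sub_one_add_two_le (G : ℝ → ℝ≥0∞) (n : ℤ) :
    ∫⁻ x in Ico ((n : ℝ) - 1) (n + 2), G x ≤
      (∫⁻ x in Ico ((n - 1 : ℤ) : ℝ) ((n - 1 : ℤ) + 1), G x) +
        (∫⁻ x in Ico (n : ℝ) (n + 1), G x) +
          ∫⁻ x in Ico ((n + 1 : ℤ) : ℝ) ((n + 1 : ℤ) + 1), G x := by
  have hsplit : Ico ((n : ℝ) - 1) (n + 2) = Ico ((n : ℝ) - 1) n ∪ Ico (n : ℝ) (n + 1) ∪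
      Ico ((n : ℝ) + 1) (n + 1 + 1) := by
    rw [Ico_union_Ico_eq_Ico (by linarith) (by linarith),
      Ico_union_Ico_eq_Ico (by linarith) (by linarith)]
    ring_nf
  push_cast
  rw [sub_add_cancel, hsplit]
  exact (lintegral_union_le _ _ _).trans (add_le_add_left (lintegral_union_le _ _ _) _)

theorem lintegral_le_three_mul_of_forall_Ico {G H : ℝ → ℝ≥0∞} {C : ℝ≥0∞}
    (hGH : ∀ n : ℤ, ∫⁻ x in Ico (n : ℝ) (n + 1), G x ≤ C * ∫⁻ x in Ico ((n : ℝ) - 1) (n + 2), H x) :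
    ∫⁻ x, G x ≤ 3 * C * ∫⁻ x, H x := by
  set A : ℤ → ℝ≥0∞ := fun n => ∫⁻ x in Ico (n : ℝ) (n + 1), H x
  have hshift : ∀ k : ℤ, ∑' n, A (n + k) = ∫⁻ x, H x := fun k => by
    rw [lintegral_eq_tsum_Ico_intCast]; exact (Equiv.addRight k).tsum_eq A
  calc ∫⁻ x, G x = ∑' n : ℤ, ∫⁻ x in Ico (n : ℝ) (n + 1), G x := lintegral_eq_tsum_Ico_intCast G
    _ ≤ ∑' n, C * (A (n + -1) + A (n + 0) + A (n + 1)) := ENNReal.tsum_le_tsum fun n => by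
        grw [hGH n, lintegral_Ico_sub_one_add_two_le H n]
        simp [A, ← sub_eq_add_neg, add_assoc]
    _ = 3 * C * ∫⁻ x, H x := by
        rw [ENNReal.tsum_mul_left, ENNReal.tsum_add, ENNReal.tsum_add, hshift, hshift, hshift]
        ring

theorem eLpNorm_le_three_mul_of_forall_Ico {ε ε' : Type*} [TopologicalSpace ε]
    [ContinuousENorm ε] [TopologicalSpace ε'] [ContinuousENorm ε'] {h : ℝ → ε} {f : ℝ → ε'}
    {c : ℝ≥0∞}
    (hhf : ∀ n : ℤ, eLpNorm h 2 (volume.restrict (Ico (n : ℝ) (n + 1))) ≤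
      c * eLpNorm f 2 (volume.restrict (Ico ((n : ℝ) - 1) (n + 2)))) :
    eLpNorm h 2 volume ≤ 3 * c * eLpNorm f 2 volume := by
  rw [← ENNReal.pow_le_pow_left_iff two_ne_zero, mul_pow, sq_eLpNorm_two, sq_eLpNorm_two]
  calc ∫⁻ x, ‖h x‖ₑ ^ 2 ≤ 3 * c ^ 2 * ∫⁻ x, ‖f x‖ₑ ^ 2 :=
        lintegral_le_three_mul_of_forall_Ico fun n => by
          simpa only [sq_eLpNorm_two, mul_pow] using ENNReal.pow_le_pow_left (n := 2) (hhf n)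
    _ ≤ (3 * c) ^ 2 * ∫⁻ x, ‖f x‖ₑ ^ 2 := by
        rw [mul_pow]
        gcongr
        norm_num

section GroupConvolution

variable {X : Type*} [NormedAddCommGroup X] [NormedSpace ℂ X] {U : ℝ → X →L[ℂ] X} {g : ℝ → ℂ}

theorem bddAbove_opNorm_of_abs_le [CompleteSpace X] (hUcont : ∀ x, Continuous fun τ => U τ x)
    (r : ℝ) : BddAbove ((fun τ => ‖U τ‖) '' {τ : ℝ | |τ| ≤ r}) := by
  have hball : {τ : ℝ | |τ| ≤ r} = Metric.closedBall 0 r := by ext; simp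
  exact hball ▸ (isCompact_closedBall 0 r).bddAbove_image_opNorm hUcont

noncomputable def localPiece (U : ℝ → X →L[ℂ] X) (f : ℝ → X) (n : ℤ) : ℝ → X :=
  (Ico ((n : ℝ) - 1) (n + 2)).indicator fun σ => U (n + 1 / 2 - σ) (f σ)

theorem norm_localPiece_le {M : ℝ} (hM : ∀ τ, |τ| ≤ 3 / 2 → ‖U τ‖ ≤ M) (f : ℝ → X) (n : ℤ)
    (σ : ℝ) : ‖localPiece U f n σ‖ ≤ M * ‖f σ‖ := by
  by_cases hσ : σ ∈ Ico ((n : ℝ) - 1) (n + 2)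
  · rw [localPiece, indicator_of_mem hσ]
    refine (U _).le_of_opNorm_le (hM _ ?_) _
    rw [abs_le]
    constructor <;> linarith [hσ.1, hσ.2]
  · rw [localPiece, indicator_of_notMem hσ, norm_zero]
    exact mul_nonneg ((norm_nonneg _).trans (hM 0 (by norm_num))) (norm_nonneg _)

theorem eLpNorm_localPiece_le {M : ℝ} (hM : ∀ τ, |τ| ≤ 3 / 2 → ‖U τ‖ ≤ M) (f : ℝ → X) (n : ℤ)
    (p : ℝ≥0∞) : eLpNorm (localPiece U f n) p volume ≤
      ENNReal.ofReal M * eLpNorm f p (volume.restrict (Ico ((n : ℝ) - 1) (n + 2))) := by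
  rw [localPiece, eLpNorm_indicator_eq_eLpNorm_restrict measurableSet_Ico]
  refine eLpNorm_le_mul_eLpNorm_of_ae_le_mul ?_ p
  filter_upwards [ae_restrict_mem measurableSet_Ico] with σ hσ
  simpa [localPiece, indicator_of_mem hσ] using norm_localPiece_le hM f n σ

theorem memLp_localPiece [CompleteSpace X] (hUcont : ∀ x, Continuous fun τ => U τ x)
    {f : ℝ → X} {p : ℝ≥0∞} (hf : MemLp f p volume) (n : ℤ) :
    MemLp (localPiece U f n) p volume := by
  obtain ⟨C, hC⟩ := bddAbove_opNorm_of_abs_le hUcont (3 / 2)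
  have hmeas : AEStronglyMeasurable (fun σ => U (n + 1 / 2 - σ) (f σ)) volume :=
    (continuous_uncurry_of_continuous_apply hUcont).comp_aestronglyMeasurable₂
      (g := fun τ x => U τ x) (by fun_prop) hf.1
  exact hf.of_le_mul (hmeas.indicator measurableSet_Ico) (ae_of_all _ fun σ =>
    norm_localPiece_le (fun τ hτ => hC ⟨τ, hτ, rfl⟩) f n σ)

theorem integral_smul_apply_eq_apply_localPiece (hU0 : U 0 = 1)
    (hUadd : ∀ s t, U (s + t) = U s ∘L U t)
    (hgsupp : Function.support g ⊆ Icc (-1) 1) (f : ℝ → X) {n : ℤ} {τ : ℝ}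
    (hτ : τ ∈ Ico (n : ℝ) (n + 1)) :
    ∫ σ, g (τ - σ) • U (τ - σ) (f σ) =
      U (τ - n - 1 / 2) (∫ σ, g (τ - σ) • localPiece U f n σ) := by
  rw [← integral_apply_comm_of_map_add hU0 hUadd]
  congr 1 with σ
  by_cases hg : g (τ - σ) = 0
  · simp [hg]
  obtain ⟨h1, h2⟩ := hgsupp hg
  have hσ : σ ∈ Ico ((n : ℝ) - 1) (n + 2) := by constructor <;> linarith [hτ.1, hτ.2]
  rw [localPiece, indicator_of_mem hσ, map_smul, ← ContinuousLinearMap.comp_apply, ← hUadd]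
  ring_nf

theorem aestronglyMeasurable_integral_smul_apply [CompleteSpace X] (hU0 : U 0 = 1)
    (hUadd : ∀ s t, U (s + t) = U s ∘L U t) (hUcont : ∀ x, Continuous fun τ => U τ x)
    (hgsupp : Function.support g ⊆ Icc (-1) 1)
    (hK : ∀ f : ℝ → X, MemLp f 2 volume → MemLp (fun τ => ∫ σ, g (τ - σ) • f σ) 2 volume)
    {f : ℝ → X} (hf : MemLp f 2 volume) :
    AEStronglyMeasurable (fun τ => ∫ σ, g (τ - σ) • U (τ - σ) (f σ)) volume := by
  have hpiece : ∀ n : ℤ, AEStronglyMeasurable (fun τ => ∫ σ, g (τ - σ) • U (τ - σ) (f σ))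
      (volume.restrict (Ico (n : ℝ) (n + 1))) := fun n => by
    have hconv := (hK _ (memLp_localPiece hUcont hf n)).1
    refine ((continuous_uncurry_of_continuous_apply hUcont).comp_aestronglyMeasurable₂
      (g := fun τ x => U τ x) (f := fun τ : ℝ => τ - n - 1 / 2) (by fun_prop)
      hconv).restrict.congr ?_
    filter_upwards [ae_restrict_mem measurableSet_Ico] with τ hτ
    exact (integral_smul_apply_eq_apply_localPiece hU0 hUadd hgsupp f hτ).symm
  simpa only [iUnion_Ico_intCast, Measure.restrict_univ] using
    aestronglyMeasurable_iUnion_iff.2 hpiece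

theorem eLpNorm_restrict_Ico_integral_smul_apply_le [CompleteSpace X] (hU0 : U 0 = 1)
    (hUadd : ∀ s t, U (s + t) = U s ∘L U t) (hUcont : ∀ x, Continuous fun τ => U τ x)
    (hgsupp : Function.support g ⊆ Icc (-1) 1) {M K : ℝ} (hM : ∀ τ, |τ| ≤ 3 / 2 → ‖U τ‖ ≤ M)
    (hK : ∀ f : ℝ → X, MemLp f 2 volume →
      eLpNorm (fun τ => ∫ σ, g (τ - σ) • f σ) 2 volume ≤ ENNReal.ofReal K * eLpNorm f 2 volume)
    {f : ℝ → X} (hf : MemLp f 2 volume) (n : ℤ) :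
    eLpNorm (fun τ => ∫ σ, g (τ - σ) • U (τ - σ) (f σ)) 2 (volume.restrict (Ico (n : ℝ) (n + 1)))
      ≤ ENNReal.ofReal M * ENNReal.ofReal K * ENNReal.ofReal M *
        eLpNorm f 2 (volume.restrict (Ico ((n : ℝ) - 1) (n + 2))) := by
  set F := localPiece U f n
  have hpointwise : ∀ᵐ τ ∂volume.restrict (Ico (n : ℝ) (n + 1)),
      ‖∫ σ, g (τ - σ) • U (τ - σ) (f σ)‖ ≤ M * ‖∫ σ, g (τ - σ) • F σ‖ := by
    filter_upwards [ae_restrict_mem measurableSet_Ico] with τ hτ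
    rw [integral_smul_apply_eq_apply_localPiece hU0 hUadd hgsupp f hτ]
    refine (U _).le_of_opNorm_le (hM _ ?_) _
    rw [abs_le]
    constructor <;> linarith [hτ.1, hτ.2]
  calc _ ≤ ENNReal.ofReal M * eLpNorm (fun τ => ∫ σ, g (τ - σ) • F σ) 2
          (volume.restrict (Ico (n : ℝ) (n + 1))) :=
        eLpNorm_le_mul_eLpNorm_of_ae_le_mul hpointwise 2
    _ ≤ ENNReal.ofReal M * eLpNorm (fun τ => ∫ σ, g (τ - σ) • F σ) 2 volume := by
        grw [eLpNorm_restrict_le]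
    _ ≤ ENNReal.ofReal M * (ENNReal.ofReal K * (ENNReal.ofReal M *
          eLpNorm f 2 (volume.restrict (Ico ((n : ℝ) - 1) (n + 2))))) := by
        grw [hK F (memLp_localPiece hUcont hf n), eLpNorm_localPiece_le hM f n 2]
    _ = _ := by ring

end GroupConvolution

theorem stmt_14_general {X : Type*} [NormedAddCommGroup X] [NormedSpace ℂ X] [CompleteSpace X]
    (U : ℝ → (X →L[ℂ] X))
    (hU0 : U 0 = 1)
    (hUadd : ∀ s t : ℝ, U (s + t) = U s ∘L U t)
    (hUcont : ∀ x : X, Continuous fun τ : ℝ => U τ x)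
    (g : ℝ → ℂ) (hgsupp : Function.support g ⊆ Set.Icc (-1 : ℝ) 1)
    (K : ℝ)
    -- K bounds the convolution operator f ↦ g * f on L²(ℝ; X)
    (hK : ∀ f : ℝ → X, MemLp f 2 (volume : Measure ℝ) →
      MemLp (fun τ : ℝ => ∫ σ : ℝ, g (τ - σ) • f σ) 2 (volume : Measure ℝ) ∧
      eLpNorm (fun τ : ℝ => ∫ σ : ℝ, g (τ - σ) • f σ) 2 (volume : Measure ℝ) ≤
        ENNReal.ofReal K * eLpNorm f 2 (volume : Measure ℝ)) :
    -- M := sup{‖U(τ)‖ : |τ| ≤ 3/2} is finite, and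
    BddAbove ((fun τ : ℝ => ‖U τ‖) '' {τ : ℝ | |τ| ≤ 3 / 2}) ∧
    -- f ↦ (τ ↦ ∫ g(τ−σ) U(τ−σ) f(σ) dσ) is bounded on L²(ℝ;X) with norm at most 3M²K
    (∀ f : ℝ → X, MemLp f 2 (volume : Measure ℝ) →
      MemLp (fun τ : ℝ => ∫ σ : ℝ, g (τ - σ) • (U (τ - σ)) (f σ)) 2 (volume : Measure ℝ) ∧
      eLpNorm (fun τ : ℝ => ∫ σ : ℝ, g (τ - σ) • (U (τ - σ)) (f σ)) 2 (volume : Measure ℝ) ≤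
        ENNReal.ofReal
          (3 * sSup ((fun τ : ℝ => ‖U τ‖) '' {τ : ℝ | |τ| ≤ 3 / 2}) ^ 2 * K) *
          eLpNorm f 2 (volume : Measure ℝ)) := by
  have hbdd := bddAbove_opNorm_of_abs_le hUcont (3 / 2)
  refine ⟨hbdd, fun f hf => ?_⟩
  set M := sSup ((fun τ : ℝ => ‖U τ‖) '' {τ : ℝ | |τ| ≤ 3 / 2})
  have hM : ∀ τ, |τ| ≤ 3 / 2 → ‖U τ‖ ≤ M := fun τ hτ => le_csSup hbdd ⟨τ, hτ, rfl⟩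
  have hM0 : 0 ≤ M := (norm_nonneg _).trans (hM 0 (by norm_num))
  have hle : eLpNorm (fun τ => ∫ σ, g (τ - σ) • U (τ - σ) (f σ)) 2 volume ≤
      ENNReal.ofReal (3 * M ^ 2 * K) * eLpNorm f 2 volume := by
    refine (eLpNorm_le_three_mul_of_forall_Ico fun n =>
      eLpNorm_restrict_Ico_integral_smul_apply_le hU0 hUadd hUcont hgsupp hM
        (fun f hf => (hK f hf).2) hf n).trans_eq ?_
    rw [ENNReal.ofReal_mul (by positivity), ENNReal.ofReal_mul (by positivity),
      ENNReal.ofReal_pow hM0, ENNReal.ofReal_ofNat]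
    ring
  refine ⟨⟨?_, hle.trans_lt (ENNReal.mul_lt_top ENNReal.ofReal_lt_top hf.2)⟩, hle⟩
  exact aestronglyMeasurable_integral_smul_apply hU0 hUadd hUcont hgsupp
    (fun f hf => (hK f hf).1) hf

theorem stmt_14 {X : Type*} [NormedAddCommGroup X] [NormedSpace ℂ X] [CompleteSpace X]
    (U : ℝ → (X →L[ℂ] X))
    (hU0 : U 0 = 1)
    (hUadd : ∀ s t : ℝ, U (s + t) = U s ∘L U t)
    (hUcont : ∀ x : X, Continuous fun τ : ℝ => U τ x)
    (g : ℝ → ℂ) (hg : Integrable g) (hgsupp : Function.support g ⊆ Set.Icc (-1 : ℝ) 1)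
    (K : ℝ) (hK0 : 0 ≤ K)
    -- K bounds the convolution operator f ↦ g * f on L²(ℝ; X)
    (hK : ∀ f : ℝ → X, MemLp f 2 (volume : Measure ℝ) →
      MemLp (fun τ : ℝ => ∫ σ : ℝ, g (τ - σ) • f σ) 2 (volume : Measure ℝ) ∧
      eLpNorm (fun τ : ℝ => ∫ σ : ℝ, g (τ - σ) • f σ) 2 (volume : Measure ℝ) ≤
        ENNReal.ofReal K * eLpNorm f 2 (volume : Measure ℝ)) :
    -- M := sup{‖U(τ)‖ : |τ| ≤ 3/2} is finite, and
    BddAbove ((fun τ : ℝ => ‖U τ‖) '' {τ : ℝ | |τ| ≤ 3 / 2}) ∧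
    -- f ↦ (τ ↦ ∫ g(τ−σ) U(τ−σ) f(σ) dσ) is bounded on L²(ℝ;X) with norm at most 3M²K
    (∀ f : ℝ → X, MemLp f 2 (volume : Measure ℝ) →
      MemLp (fun τ : ℝ => ∫ σ : ℝ, g (τ - σ) • (U (τ - σ)) (f σ)) 2 (volume : Measure ℝ) ∧
      eLpNorm (fun τ : ℝ => ∫ σ : ℝ, g (τ - σ) • (U (τ - σ)) (f σ)) 2 (volume : Measure ℝ) ≤
        ENNReal.ofReal
          (3 * sSup ((fun τ : ℝ => ‖U τ‖) '' {τ : ℝ | |τ| ≤ 3 / 2}) ^ 2 * K) *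
          eLpNorm f 2 (volume : Measure ℝ)) :=
  stmt_14_general U hU0 hUadd hUcont g hgsupp K hK
end

section
/- Let X be a Banach space with dual space X′, and let f : (0, ∞) → X and g : (0, ∞) → X′ be continuous functions for which there exist C, ε > 0 with ‖f(t)‖_X ≤ C min(t^ε, t^{−ε}) and ‖g(t)‖_{X′} ≤ C min(t^ε, t^{−ε}) for all t > 0. For σ ∈ ℝ define the absolutely convergent Bochner integrals Mf(iσ) = ∫₀^∞ t^{iσ−1} f(t) dt ∈ X and Mg(−iσ) = ∫₀^∞ t^{−iσ−1} g(t) dt ∈ X′. If in addition σ ↦ ‖Mf(iσ)‖_X is integrable over ℝ, then ∫₀^∞ ⟨f(t), g(t)⟩ dt/t = (1/2π) ∫_ℝ ⟨Mf(iσ), Mg(−iσ)⟩ dσ, where both integrals converge absolutely. -/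
/-!
By Mellin inversion on the imaginary axis, `f t = (1/2π) ∫ t^{-iσ} Mf(iσ) dσ` for `t > 0`.
Pairing with `g t / t` gives the kernel `t^{-iσ-1} ⟨Mf(iσ), g t⟩`, which is dominated by
`(‖g t‖ / t) ‖Mf(iσ)‖ ∈ L¹((0,∞) × ℝ)`; Fubini then turns the inner `t`-integral into
`⟨Mf(iσ), Mg(-iσ)⟩` and also yields both integrability statements.
-/

open MeasureTheory Set Complex Filter Asymptotics
open scoped Topology

section MinRpowBound

variable {E : Type*} [NormedAddCommGroup E] {h : ℝ → E} {C ε : ℝ}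

lemma nonneg_of_norm_le_min_rpow (hb : ∀ t : ℝ, 0 < t → ‖h t‖ ≤ C * min (t ^ ε) (t ^ (-ε))) :
    0 ≤ C := by
  simpa using (norm_nonneg _).trans (hb 1 one_pos)

lemma isBigO_rpow_atTop_of_norm_le_min_rpow
    (hb : ∀ t : ℝ, 0 < t → ‖h t‖ ≤ C * min (t ^ ε) (t ^ (-ε))) :
    h =O[atTop] (· ^ (-ε)) := by
  refine IsBigO.of_bound C ?_
  filter_upwards [eventually_gt_atTop 0] with t ht
  rw [Real.norm_of_nonneg (Real.rpow_nonneg ht.le _)]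
  exact (hb t ht).trans (mul_le_mul_of_nonneg_left (min_le_right _ _)
    (nonneg_of_norm_le_min_rpow hb))

lemma isBigO_rpow_nhdsGT_zero_of_norm_le_min_rpow
    (hb : ∀ t : ℝ, 0 < t → ‖h t‖ ≤ C * min (t ^ ε) (t ^ (-ε))) :
    h =O[𝓝[>] 0] (· ^ ε) := by
  refine IsBigO.of_bound C ?_
  filter_upwards [self_mem_nhdsWithin] with t ht
  rw [Real.norm_of_nonneg (Real.rpow_nonneg (le_of_lt ht) _)]
  exact (hb t ht).trans (mul_le_mul_of_nonneg_left (min_le_left _ _)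
    (nonneg_of_norm_le_min_rpow hb))

variable [NormedSpace ℂ E] {s : ℂ}

lemma mellinConvergent_of_norm_le_min_rpow (hc : ContinuousOn h (Ioi 0))
    (hb : ∀ t : ℝ, 0 < t → ‖h t‖ ≤ C * min (t ^ ε) (t ^ (-ε))) (hs : |s.re| < ε) :
    MellinConvergent h s :=
  mellinConvergent_of_isBigO_rpow (hc.locallyIntegrableOn measurableSet_Ioi)
    (isBigO_rpow_atTop_of_norm_le_min_rpow hb) (abs_lt.1 hs).2
    (by simpa only [neg_neg] using isBigO_rpow_nhdsGT_zero_of_norm_le_min_rpow hb) (abs_lt.1 hs).1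

lemma differentiableAt_mellin_of_norm_le_min_rpow (hc : ContinuousOn h (Ioi 0))
    (hb : ∀ t : ℝ, 0 < t → ‖h t‖ ≤ C * min (t ^ ε) (t ^ (-ε))) (hs : |s.re| < ε) :
    DifferentiableAt ℂ (mellin h) s :=
  mellin_differentiableAt_of_isBigO_rpow (hc.locallyIntegrableOn measurableSet_Ioi)
    (isBigO_rpow_atTop_of_norm_le_min_rpow hb) (abs_lt.1 hs).2
    (by simpa only [neg_neg] using isBigO_rpow_nhdsGT_zero_of_norm_le_min_rpow hb) (abs_lt.1 hs).1

lemma continuous_mellin_mul_I_of_norm_le_min_rpow (hc : ContinuousOn h (Ioi 0))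
    (hb : ∀ t : ℝ, 0 < t → ‖h t‖ ≤ C * min (t ^ ε) (t ^ (-ε))) (hε : 0 < ε) :
    Continuous fun σ : ℝ => mellin h (I * σ) :=
  continuous_iff_continuousAt.2 fun σ =>
    (differentiableAt_mellin_of_norm_le_min_rpow hc hb (by simpa using hε)).continuousAt.comp
      (by fun_prop)

end MinRpowBound

lemma mellinInv_zero_eq {E : Type*} [NormedAddCommGroup E] [NormedSpace ℂ E] (F : ℂ → E) (t : ℝ) :
    mellinInv 0 F t = (1 / (2 * Real.pi)) • ∫ σ : ℝ, (t : ℂ) ^ (-(I * σ)) • F (I * σ) := by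
  simp only [mellinInv, ofReal_zero, zero_add, mul_comm _ I]

lemma verticalIntegrable_zero_iff {E : Type*} [NormedAddCommGroup E] {F : ℂ → E} :
    VerticalIntegrable F 0 ↔ Integrable fun σ : ℝ => F (I * σ) := by
  simp only [VerticalIntegrable, ofReal_zero, zero_add, mul_comm _ I]

lemma MellinConvergent.mellin_apply {X : Type*} [NormedAddCommGroup X] [NormedSpace ℂ X]
    {g : ℝ → (X →L[ℂ] ℂ)} {s : ℂ} (hg : MellinConvergent g s) (x : X) :
    mellin g s x = ∫ t in Ioi (0 : ℝ), (t : ℂ) ^ (s - 1) * g t x := by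
  simpa [mellin] using ((ContinuousLinearMap.apply ℂ ℂ x).integral_comp_comm hg).symm

section Pairing

variable {X : Type*} [NormedAddCommGroup X] [NormedSpace ℂ X] {g : ℝ → (X →L[ℂ] ℂ)} {M : ℝ → X}

lemma integrable_cpow_neg_mul_I_smul (hM : Integrable M) {t : ℝ} (ht : 0 < t) :
    Integrable fun σ : ℝ => (t : ℂ) ^ (-(I * σ)) • M σ := by
  have hcont : Continuous fun σ : ℝ => (t : ℂ) ^ (-(I * σ)) :=
    (by fun_prop : Continuous fun σ : ℝ => -(I * σ)).const_cpow (Or.inl (ofReal_ne_zero.2 ht.ne'))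
  refine hM.norm.mono' (hcont.aestronglyMeasurable.smul hM.aestronglyMeasurable)
    (ae_of_all _ fun σ => ?_)
  simp [norm_smul, norm_cpow_eq_rpow_re_of_pos ht]

lemma apply_integral_cpow_smul_div [CompleteSpace X] (hM : Integrable M) {t : ℝ} (ht : 0 < t) :
    g t (∫ σ : ℝ, (t : ℂ) ^ (-(I * σ)) • M σ) / t
      = ∫ σ : ℝ, (t : ℂ) ^ (-(I * σ) - 1) * g t (M σ) := by
  rw [← (g t).integral_comp_comm (integrable_cpow_neg_mul_I_smul hM ht), ← integral_div]
  congr 1 with σ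
  rw [map_smul, smul_eq_mul, cpow_sub _ _ (ofReal_ne_zero.2 ht.ne'), cpow_one, mul_div_right_comm]

lemma integrable_cpow_mul_apply (hg : ContinuousOn g (Ioi 0)) (hg0 : MellinConvergent g 0)
    (hMc : Continuous M) (hM : Integrable M) :
    Integrable (Function.uncurry fun (t σ : ℝ) => (t : ℂ) ^ (-(I * σ) - 1) * g t (M σ))
      ((volume.restrict (Ioi 0)).prod volume) := by
  have hg1 : Integrable (fun t : ℝ => t ^ (-1 : ℝ) * ‖g t‖) (volume.restrict (Ioi 0)) := by
    refine hg0.norm.congr ?_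
    filter_upwards [ae_restrict_mem measurableSet_Ioi] with t ht
    simp [norm_smul, norm_cpow_eq_rpow_re_of_pos ht]
  have hcont : ContinuousOn (fun p : ℝ × ℝ => (p.1 : ℂ) ^ (-(I * p.2) - 1) * g p.1 (M p.2))
      (Ioi 0 ×ˢ univ) := by
    refine ContinuousOn.mul (fun p hp => ContinuousAt.continuousWithinAt ?_)
      ((hg.comp continuous_fst.continuousOn fun p hp => hp.1).clm_apply
        (hMc.comp continuous_snd).continuousOn)
    exact (continuousAt_cpow (ofReal_mem_slitPlane.2 hp.1)).comp
      (f := fun p : ℝ × ℝ => ((p.1 : ℂ), -(I * p.2) - 1)) (by fun_prop)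
  refine (hg1.mul_prod hM.norm).mono' ?_ ?_
  · rw [Measure.restrict_prod_eq_prod_univ]
    exact hcont.aestronglyMeasurable (measurableSet_Ioi.prod MeasurableSet.univ)
  · rw [Measure.restrict_prod_eq_prod_univ]
    filter_upwards [ae_restrict_mem (measurableSet_Ioi.prod MeasurableSet.univ)] with p hp
    have hre : (-(I * p.2) - 1).re = -1 := by simp
    rw [Function.uncurry_apply_pair, norm_mul, norm_cpow_eq_rpow_re_of_pos hp.1, hre, mul_assoc]
    exact mul_le_mul_of_nonneg_left ((g p.1).le_opNorm (M p.2)) (Real.rpow_nonneg hp.1.le _)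

lemma integrable_mellin_apply (hg : ContinuousOn g (Ioi 0))
    (hgM : ∀ σ : ℝ, MellinConvergent g (-(I * σ))) (hMc : Continuous M) (hM : Integrable M) :
    Integrable fun σ : ℝ => mellin g (-(I * σ)) (M σ) :=
  (integrable_cpow_mul_apply hg (by simpa using hgM 0) hMc hM).integral_prod_right.congr
    (ae_of_all _ fun σ => ((hgM σ).mellin_apply (M σ)).symm)

variable [CompleteSpace X]

lemma integrableOn_apply_integral_cpow_smul_div (hg : ContinuousOn g (Ioi 0))
    (hg0 : MellinConvergent g 0) (hMc : Continuous M) (hM : Integrable M) :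
    IntegrableOn (fun t : ℝ => g t (∫ σ : ℝ, (t : ℂ) ^ (-(I * σ)) • M σ) / t) (Ioi 0) :=
  (integrable_cpow_mul_apply hg hg0 hMc hM).integral_prod_left.congr
    ((ae_restrict_iff' measurableSet_Ioi).2
      (ae_of_all _ fun _ ht => (apply_integral_cpow_smul_div hM ht).symm))

lemma setIntegral_apply_integral_cpow_smul_div (hg : ContinuousOn g (Ioi 0))
    (hgM : ∀ σ : ℝ, MellinConvergent g (-(I * σ))) (hMc : Continuous M) (hM : Integrable M) :
    ∫ t in Ioi 0, g t (∫ σ : ℝ, (t : ℂ) ^ (-(I * σ)) • M σ) / t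
      = ∫ σ : ℝ, mellin g (-(I * σ)) (M σ) := by
  rw [setIntegral_congr_fun measurableSet_Ioi fun t ht => apply_integral_cpow_smul_div hM ht,
    integral_integral_swap (integrable_cpow_mul_apply hg (by simpa using hgM 0) hMc hM)]
  exact integral_congr_ae (ae_of_all _ fun σ => ((hgM σ).mellin_apply (M σ)).symm)

end Pairing

theorem stmt_15_general {X : Type*} [NormedAddCommGroup X] [NormedSpace ℂ X] [CompleteSpace X]
    (f : ℝ → X) (g : ℝ → (X →L[ℂ] ℂ))
    (hf : ContinuousOn f (Set.Ioi 0)) (hg : ContinuousOn g (Set.Ioi 0))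
    (C ε : ℝ) (hε : 0 < ε)
    (hfb : ∀ t : ℝ, 0 < t → ‖f t‖ ≤ C * min (t ^ ε) (t ^ (-ε)))
    (hgb : ∀ t : ℝ, 0 < t → ‖g t‖ ≤ C * min (t ^ ε) (t ^ (-ε)))
    -- σ ↦ ‖Mf(iσ)‖ is integrable over ℝ
    (hint : Integrable fun σ : ℝ =>
      ‖∫ t in Set.Ioi (0 : ℝ), (t : ℂ) ^ (Complex.I * (σ : ℂ) - 1) • f t‖) :
    -- both integrals converge absolutely and the Plancherel-Mellin identity holds:
    IntegrableOn (fun t : ℝ => (g t) (f t) / (t : ℂ)) (Set.Ioi 0) ∧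
    Integrable (fun σ : ℝ =>
      (∫ t in Set.Ioi (0 : ℝ), (t : ℂ) ^ (-Complex.I * (σ : ℂ) - 1) • g t)
        (∫ t in Set.Ioi (0 : ℝ), (t : ℂ) ^ (Complex.I * (σ : ℂ) - 1) • f t)) ∧
    ∫ t in Set.Ioi (0 : ℝ), (g t) (f t) / (t : ℂ) =
      (1 / (2 * (Real.pi : ℂ))) * ∫ σ : ℝ,
        (∫ t in Set.Ioi (0 : ℝ), (t : ℂ) ^ (-Complex.I * (σ : ℂ) - 1) • g t)
          (∫ t in Set.Ioi (0 : ℝ), (t : ℂ) ^ (Complex.I * (σ : ℂ) - 1) • f t) := by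
  have hf0 : MellinConvergent f 0 := mellinConvergent_of_norm_le_min_rpow hf hfb (by simpa)
  have hgM (σ : ℝ) : MellinConvergent g (-(I * σ)) :=
    mellinConvergent_of_norm_le_min_rpow hg hgb (by simpa using hε)
  have hMc := continuous_mellin_mul_I_of_norm_le_min_rpow hf hfb hε
  have hM : Integrable fun σ : ℝ => mellin f (I * σ) :=
    (integrable_norm_iff hMc.aestronglyMeasurable).1 hint
  have hinv : ∀ t ∈ Ioi (0 : ℝ), g t (f t) / t
      = 1 / (2 * Real.pi) * (g t (∫ σ : ℝ, (t : ℂ) ^ (-(I * σ)) • mellin f (I * σ)) / t) := by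
    intro t ht
    rw [← mellinInv_mellin_eq 0 f ht hf0 (verticalIntegrable_zero_iff.2 hM)
      (hf.continuousAt (Ioi_mem_nhds ht)), mellinInv_zero_eq, ContinuousLinearMap.map_smul_of_tower,
      real_smul]
    push_cast
    ring
  simp only [neg_mul]
  refine ⟨IntegrableOn.congr_fun
      ((integrableOn_apply_integral_cpow_smul_div hg (by simpa using hgM 0) hMc hM).const_mul _)
      (fun t ht => (hinv t ht).symm) measurableSet_Ioi,
    integrable_mellin_apply hg hgM hMc hM, ?_⟩
  rw [setIntegral_congr_fun measurableSet_Ioi hinv, integral_const_mul,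
    setIntegral_apply_integral_cpow_smul_div hg hgM hMc hM]
  rfl

theorem stmt_15 {X : Type*} [NormedAddCommGroup X] [NormedSpace ℂ X] [CompleteSpace X]
    (f : ℝ → X) (g : ℝ → (X →L[ℂ] ℂ))
    (hf : ContinuousOn f (Set.Ioi 0)) (hg : ContinuousOn g (Set.Ioi 0))
    (C ε : ℝ) (hC : 0 < C) (hε : 0 < ε)
    (hfb : ∀ t : ℝ, 0 < t → ‖f t‖ ≤ C * min (t ^ ε) (t ^ (-ε)))
    (hgb : ∀ t : ℝ, 0 < t → ‖g t‖ ≤ C * min (t ^ ε) (t ^ (-ε)))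
    -- σ ↦ ‖Mf(iσ)‖ is integrable over ℝ
    (hint : Integrable fun σ : ℝ =>
      ‖∫ t in Set.Ioi (0 : ℝ), (t : ℂ) ^ (Complex.I * (σ : ℂ) - 1) • f t‖) :
    -- both integrals converge absolutely and the Plancherel-Mellin identity holds:
    IntegrableOn (fun t : ℝ => (g t) (f t) / (t : ℂ)) (Set.Ioi 0) ∧
    Integrable (fun σ : ℝ =>
      (∫ t in Set.Ioi (0 : ℝ), (t : ℂ) ^ (-Complex.I * (σ : ℂ) - 1) • g t)
        (∫ t in Set.Ioi (0 : ℝ), (t : ℂ) ^ (Complex.I * (σ : ℂ) - 1) • f t)) ∧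
    ∫ t in Set.Ioi (0 : ℝ), (g t) (f t) / (t : ℂ) =
      (1 / (2 * (Real.pi : ℂ))) * ∫ σ : ℝ,
        (∫ t in Set.Ioi (0 : ℝ), (t : ℂ) ^ (-Complex.I * (σ : ℂ) - 1) • g t)
          (∫ t in Set.Ioi (0 : ℝ), (t : ℂ) ^ (Complex.I * (σ : ℂ) - 1) • f t) :=
  stmt_15_general f g hf hg C ε hε hfb hgb hint
end
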